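/- arXiv:1803.00665 — 9 statements merged into one kernel-verified Lean document; each statement's English description precedes it below -/
import Mathlib

section
/- If coarse-graining C₂ is finer than coarse-graining C₁ (every projector of C₁ is a sum of projectors of C₂), then S_O(C₁)(ρ) ≥ S_O(C₂)(ρ) for every density matrix ρ. -/
open scoped BigOperators ComplexOrder
open Matrix

/-- A coarse-graining: a family of nonzero, mutually orthogonal Hermitian projectors
summing to the identity. -/
def IsCoarseGraining {n : Type} [Fintype n] [DecidableEq n] {ι : Type} [Fintype ι]
    (P : ι → Matrix n n ℂ) : Prop :=
  (∀ i, (P i).IsHermitian) ∧ (∀ i, P i * P i = P i) ∧ (∀ i, P i ≠ 0) ∧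
  (∀ i j, i ≠ j → P i * P j = 0) ∧ (∑ i, P i = 1)

/-- A density matrix: positive semidefinite with unit trace. -/
def IsDensityMatrix {n : Type} [Fintype n] [DecidableEq n] (ρ : Matrix n n ℂ) : Prop :=
  ρ.PosSemidef ∧ ρ.trace = 1

/-- Probability of macrostate `i`: `p_i = tr(P_i ρ)`. -/
noncomputable def prob {n : Type} [Fintype n] [DecidableEq n] {ι : Type} [Fintype ι]
    (P : ι → Matrix n n ℂ) (ρ : Matrix n n ℂ) (i : ι) : ℝ :=
  ((P i * ρ).trace).re

/-- Volume of macrostate `i`: `tr(P_i)`. -/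
noncomputable def vol {n : Type} [Fintype n] [DecidableEq n] {ι : Type} [Fintype ι]
    (P : ι → Matrix n n ℂ) (i : ι) : ℝ :=
  ((P i).trace).re

/-- Observational entropy `S_O(C)(ρ) = -∑_{i : p_i ≠ 0} p_i ln (p_i / tr P_i)`.
(Terms with `p_i = 0` vanish since `0 * log _ = 0`.) -/
noncomputable def obsEntropy {n : Type} [Fintype n] [DecidableEq n] {ι : Type} [Fintype ι]
    (P : ι → Matrix n n ℂ) (ρ : Matrix n n ℂ) : ℝ :=
  -∑ i, prob P ρ i * Real.log (prob P ρ i / vol P i)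

/-- `Q` is finer than `P`: every projector of `P` is a sum of projectors of `Q`. -/
def Finer {n : Type} [Fintype n] [DecidableEq n] {ι κ : Type} [Fintype ι] [Fintype κ]
    (P : ι → Matrix n n ℂ) (Q : κ → Matrix n n ℂ) : Prop :=
  ∀ i, ∃ I : Finset κ, P i = ∑ j ∈ I, Q j

/-!
Each `P_i` is the sum of the `Q_j` with `j ∈ I i`, so `p_i` and `tr P_i` are the corresponding
sums of `p_j` and `tr Q_j`, and the log-sum inequality (Jensen for `x ↦ x log x`) gives
`p_i log (p_i / tr P_i) ≤ ∑_{j ∈ I i} p_j log (p_j / tr Q_j)`. Because the projectors are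
nonzero (hence of positive trace), mutually orthogonal and sum to `1`, the sets `I i` partition
the finer index set, and summing over `i` gives the claim.
-/

namespace Real

/-- The log-sum inequality. -/
theorem sum_mul_log_sum_div_sum_le {κ : Type*} (s : Finset κ) (q v : κ → ℝ)
    (hq : ∀ j ∈ s, 0 ≤ q j) (hv : ∀ j ∈ s, 0 < v j) :
    (∑ j ∈ s, q j) * log ((∑ j ∈ s, q j) / ∑ j ∈ s, v j) ≤ ∑ j ∈ s, q j * log (q j / v j) := by
  rcases s.eq_empty_or_nonempty with rfl | hs
  · simp
  set V := ∑ j ∈ s, v j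
  have hV : 0 < V := Finset.sum_pos hv hs
  -- Jensen for `x ↦ x log x` at the points `q j / v j` with weights `v j / V`.
  have hJensen := convexOn_mul_log.map_sum_le (t := s) (w := fun j ↦ v j / V)
    (p := fun j ↦ q j / v j) (fun j hj ↦ (div_pos (hv j hj) hV).le)
    (by rw [← Finset.sum_div, div_self hV.ne'])
    (fun j hj ↦ Set.mem_Ici.mpr (div_nonneg (hq j hj) (hv j hj).le))
  simp only [smul_eq_mul] at hJensen
  have hmean : ∑ j ∈ s, v j / V * (q j / v j) = (∑ j ∈ s, q j) / V := by
    rw [Finset.sum_div]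
    exact Finset.sum_congr rfl fun j hj ↦ by field_simp [(hv j hj).ne']
  have hterms : ∑ j ∈ s, v j / V * (q j / v j * log (q j / v j)) =
      (∑ j ∈ s, q j * log (q j / v j)) / V := by
    rw [Finset.sum_div]
    exact Finset.sum_congr rfl fun j hj ↦ by field_simp [(hv j hj).ne']
  rw [hmean, hterms, div_mul_eq_mul_div, div_le_div_iff_of_pos_right hV] at hJensen
  exact hJensen

end Real

namespace Matrix

variable {n : Type*} [Fintype n]

theorem posSemidef_of_isHermitian_of_mul_self {Q : Matrix n n ℂ} (hh : Q.IsHermitian)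
    (hi : Q * Q = Q) : Q.PosSemidef := by
  simpa only [hh.eq, hi] using posSemidef_conjTranspose_mul_self Q

theorem re_trace_pos_of_isHermitian_of_mul_self {Q : Matrix n n ℂ} (hh : Q.IsHermitian)
    (hi : Q * Q = Q) (hne : Q ≠ 0) : 0 < Q.trace.re := by
  have hQ := posSemidef_of_isHermitian_of_mul_self hh hi
  have hpos : 0 < Q.trace := lt_of_le_of_ne hQ.trace_nonneg fun h ↦ hne (hQ.trace_eq_zero_iff.mp h.symm)
  exact (Complex.pos_iff.mp hpos).1

theorem re_trace_mul_nonneg_of_isHermitian_of_mul_self {Q ρ : Matrix n n ℂ} (hh : Q.IsHermitian)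
    (hi : Q * Q = Q) (hρ : ρ.PosSemidef) : 0 ≤ (Q * ρ).trace.re := by
  have hcycle : (Q * ρ).trace = (Q * ρ * Qᴴ).trace := by
    rw [trace_mul_cycle, hh.eq, hi]
  rw [hcycle]
  exact (Complex.nonneg_iff.mp (hρ.mul_mul_conjTranspose_same Q).trace_nonneg).1

end Matrix

theorem Finset.sum_mul_sum_of_orthogonal_idempotents {R κ : Type*} [NonUnitalSemiring R]
    [DecidableEq κ] {Q : κ → R} (hidem : ∀ j, Q j * Q j = Q j)
    (horth : ∀ i j, i ≠ j → Q i * Q j = 0) (s t : Finset κ) :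
    (∑ j ∈ s, Q j) * (∑ j ∈ t, Q j) = ∑ j ∈ s ∩ t, Q j := by
  have hmul : ∀ i j, Q i * Q j = if i = j then Q i else 0 := by
    intro i j
    split_ifs with h
    · rw [h, hidem]
    · exact horth i j h
  simp only [Finset.sum_mul_sum, hmul, Finset.sum_ite_eq, Finset.sum_ite_mem]

section CoarseGraining

variable {n ι κ : Type} [Fintype n] [DecidableEq n] [Fintype ι] [Fintype κ]
  {P : ι → Matrix n n ℂ} {Q : κ → Matrix n n ℂ}

theorem prob_eq_sum_of_eq_sum {i : ι} {s : Finset κ} (h : P i = ∑ j ∈ s, Q j)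
    (ρ : Matrix n n ℂ) : prob P ρ i = ∑ j ∈ s, prob Q ρ j := by
  simp only [prob, h, Finset.sum_mul, Matrix.trace_sum, Complex.re_sum]

theorem vol_eq_sum_of_eq_sum {i : ι} {s : Finset κ} (h : P i = ∑ j ∈ s, Q j) :
    vol P i = ∑ j ∈ s, vol Q j := by
  simp only [vol, h, Matrix.trace_sum, Complex.re_sum]

namespace IsCoarseGraining

theorem vol_pos (hQ : IsCoarseGraining Q) (j : κ) : 0 < vol Q j :=
  Matrix.re_trace_pos_of_isHermitian_of_mul_self (hQ.1 j) (hQ.2.1 j) (hQ.2.2.1 j)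

theorem prob_nonneg (hQ : IsCoarseGraining Q) {ρ : Matrix n n ℂ} (hρ : ρ.PosSemidef) (j : κ) :
    0 ≤ prob Q ρ j :=
  Matrix.re_trace_mul_nonneg_of_isHermitian_of_mul_self (hQ.1 j) (hQ.2.1 j) hρ

theorem sum_eq_zero_iff (hQ : IsCoarseGraining Q) (s : Finset κ) :
    ∑ j ∈ s, Q j = 0 ↔ s = ∅ := by
  refine ⟨fun h ↦ ?_, fun h ↦ by rw [h, Finset.sum_empty]⟩
  have hvol : ∑ j ∈ s, vol Q j = 0 := by
    simpa only [vol, Matrix.trace_sum, Complex.re_sum, Matrix.trace_zero, Complex.zero_re]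
      using congrArg (fun M ↦ M.trace.re) h
  by_contra hs
  exact (Finset.sum_pos (fun j _ ↦ hQ.vol_pos j) (Finset.nonempty_iff_ne_empty.mpr hs)).ne' hvol

theorem pairwiseDisjoint_of_eq_sum (hP : IsCoarseGraining P) (hQ : IsCoarseGraining Q)
    {I : ι → Finset κ} (hI : ∀ i, P i = ∑ j ∈ I i, Q j) :
    (Set.univ : Set ι).PairwiseDisjoint I := by
  classical
  intro i _ i' _ hii'
  have hinter : ∑ j ∈ I i ∩ I i', Q j = 0 := by
    rw [← Finset.sum_mul_sum_of_orthogonal_idempotents hQ.2.1 hQ.2.2.2.1, ← hI, ← hI]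
    exact hP.2.2.2.1 i i' hii'
  exact Finset.disjoint_iff_inter_eq_empty.mpr ((hQ.sum_eq_zero_iff _).mp hinter)

theorem biUnion_eq_univ_of_eq_sum [DecidableEq κ] (hP : IsCoarseGraining P)
    (hQ : IsCoarseGraining Q) {I : ι → Finset κ} (hI : ∀ i, P i = ∑ j ∈ I i, Q j) :
    Finset.univ.biUnion I = Finset.univ := by
  set B := Finset.univ.biUnion I
  have hB : ∑ j ∈ B, Q j = ∑ j, Q j := by
    rw [Finset.sum_biUnion (by simpa using hP.pairwiseDisjoint_of_eq_sum hQ hI), hQ.2.2.2.2]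
    simp only [← hI, hP.2.2.2.2]
  have hcompl : ∑ j ∈ Finset.univ \ B, Q j = 0 := by
    have hsplit := Finset.sum_sdiff (f := Q) (Finset.subset_univ B)
    rw [hB] at hsplit
    exact add_eq_right.mp hsplit
  exact Finset.Subset.antisymm (Finset.subset_univ _)
    (Finset.sdiff_eq_empty_iff_subset.mp ((hQ.sum_eq_zero_iff _).mp hcompl))

end IsCoarseGraining

end CoarseGraining

/-- if the coarse-graining `Q` is finer than `P`, then
`S_O(P)(ρ) ≥ S_O(Q)(ρ)` for every density matrix `ρ`. -/
theorem obsEntropy_monotone {n : Type} [Fintype n] [DecidableEq n] {ι κ : Type}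
    [Fintype ι] [Fintype κ]
    (P : ι → Matrix n n ℂ) (Q : κ → Matrix n n ℂ)
    (hP : IsCoarseGraining P) (hQ : IsCoarseGraining Q) (hF : Finer P Q)
    (ρ : Matrix n n ℂ) (hρ : IsDensityMatrix ρ) :
    obsEntropy P ρ ≥ obsEntropy Q ρ := by
  classical
  choose I hI using hF
  rw [obsEntropy, obsEntropy, ge_iff_le, neg_le_neg_iff]
  calc ∑ i, prob P ρ i * Real.log (prob P ρ i / vol P i)
      ≤ ∑ i, ∑ j ∈ I i, prob Q ρ j * Real.log (prob Q ρ j / vol Q j) := by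
        refine Finset.sum_le_sum fun i _ ↦ ?_
        rw [prob_eq_sum_of_eq_sum (hI i), vol_eq_sum_of_eq_sum (hI i)]
        exact Real.sum_mul_log_sum_div_sum_le _ _ _ (fun j _ ↦ hQ.prob_nonneg hρ.1 j)
          (fun j _ ↦ hQ.vol_pos j)
    _ = ∑ j, prob Q ρ j * Real.log (prob Q ρ j / vol Q j) := by
        rw [← Finset.sum_biUnion (by simpa using hP.pairwiseDisjoint_of_eq_sum hQ hI),
          hP.biUnion_eq_univ_of_eq_sum hQ hI]
end

section
/- For any coarse-graining C and density matrix ρ on a finite-dimensional Hilbert space H, the observational entropy satisfies S(ρ) ≤ S_O(C)(ρ) ≤ ln dim H, where S(ρ) = -tr(ρ ln ρ) is the von Neumann entropy. -/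
open scoped BigOperators ComplexOrder
open Matrix

/-- Von Neumann entropy `S(ρ) = -tr(ρ ln ρ)`, expressed via the eigenvalues of `ρ`. -/
noncomputable def vnEntropy {n : Type} [Fintype n] [DecidableEq n] {A : Matrix n n ℂ}
    (hA : A.IsHermitian) : ℝ :=
  -∑ i, hA.eigenvalues i * Real.log (hA.eigenvalues i)

/-! Diagonalize `ρ = ∑ⱼ λⱼ |vⱼ⟩⟨vⱼ|` and put `aᵢⱼ = ⟨vⱼ, Pᵢ vⱼ⟩ ≥ 0`. Since `∑ᵢ Pᵢ = 1`, the matrix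
`a` is column-stochastic, and `pᵢ = ∑ⱼ aᵢⱼ λⱼ`, `tr Pᵢ = ∑ⱼ aᵢⱼ`. Both bounds are then the log-sum
inequality: applied to `(aᵢⱼ λⱼ)ⱼ` and `(aᵢⱼ)ⱼ` it gives `pᵢ ln (pᵢ / tr Pᵢ) ≤ ∑ⱼ aᵢⱼ λⱼ ln λⱼ`,
which sums over `i` to the lower bound; applied to `(pᵢ)` and `(tr Pᵢ)`, whose sums are `1` and
`dim H`, it gives the upper bound. -/

open Finset Real

theorem Real.sum_mul_log_div_sum_le {ι : Type*} (s : Finset ι) {x y : ι → ℝ}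
    (hx : ∀ j ∈ s, 0 ≤ x j) (hy : ∀ j ∈ s, 0 ≤ y j) (hxy : ∀ j ∈ s, y j = 0 → x j = 0) :
    (∑ j ∈ s, x j) * log ((∑ j ∈ s, x j) / ∑ j ∈ s, y j) ≤ ∑ j ∈ s, x j * log (x j / y j) := by
  rcases (sum_nonneg hx).eq_or_lt with hX | hX
  · have hx0 := (sum_eq_zero_iff_of_nonneg hx).1 hX.symm
    rw [← hX, zero_mul, sum_eq_zero fun j hj => by rw [hx0 j hj, zero_mul]]
  have hY : 0 < ∑ j ∈ s, y j := by
    refine (sum_nonneg hy).lt_of_ne fun hY => hX.ne' (sum_eq_zero fun j hj => ?_)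
    exact hxy j hj ((sum_eq_zero_iff_of_nonneg hy).1 hY.symm j hj)
  set c := (∑ j ∈ s, x j) / ∑ j ∈ s, y j
  have hc : 0 < c := div_pos hX hY
  -- `log (c y / x) ≤ c y / x - 1`, multiplied by `x`
  have pointwise : ∀ j ∈ s, x j * log c ≤ x j * log (x j / y j) + c * y j - x j := by
    intro j hj
    rcases (hx j hj).eq_or_lt with hxj | hxj
    · rw [← hxj]
      simpa using mul_nonneg hc.le (hy j hj)
    have hyj : 0 < y j := (hy j hj).lt_of_ne fun h => hxj.ne' (hxy j hj h.symm)
    have key := mul_le_mul_of_nonneg_left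
      (log_le_sub_one_of_pos (by positivity : 0 < c * y j / x j)) hxj.le
    rw [log_div (by positivity) hxj.ne', log_mul hc.ne' hyj.ne', mul_sub_one,
      mul_div_cancel₀ _ hxj.ne'] at key
    rw [log_div hxj.ne' hyj.ne']
    linarith
  calc (∑ j ∈ s, x j) * log c = ∑ j ∈ s, x j * log c := sum_mul ..
    _ ≤ ∑ j ∈ s, (x j * log (x j / y j) + c * y j - x j) := sum_le_sum pointwise
    _ = ∑ j ∈ s, x j * log (x j / y j) := by
      rw [sum_sub_distrib, sum_add_distrib, ← mul_sum, div_mul_cancel₀ _ hY.ne',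
        add_sub_cancel_right]

section StochasticWeights

variable {ι κ : Type*} [Fintype ι] [Fintype κ] {a : ι → κ → ℝ} {w : κ → ℝ}

theorem sum_mul_log_div_le_sum_mul_log (ha : ∀ i j, 0 ≤ a i j) (hcol : ∀ j, ∑ i, a i j = 1)
    (hw : ∀ j, 0 ≤ w j) :
    ∑ i, (∑ j, a i j * w j) * log ((∑ j, a i j * w j) / ∑ j, a i j) ≤
      ∑ j, w j * log (w j) := by
  calc _ ≤ ∑ i, ∑ j, a i j * w j * log (w j) := sum_le_sum fun i _ => ?_
    _ = ∑ j, w j * log (w j) := by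
        rw [sum_comm]; simp_rw [mul_assoc, ← sum_mul, hcol, one_mul]
  refine (sum_mul_log_div_sum_le univ (fun j _ => mul_nonneg (ha i j) (hw j))
    (fun j _ => ha i j) fun j _ h => by rw [h, zero_mul]).trans_eq ?_
  refine sum_congr rfl fun j _ => ?_
  rcases eq_or_ne (a i j) 0 with h | h
  · simp [h]
  · rw [mul_div_cancel_left₀ _ h]

theorem neg_log_card_le_sum_mul_log_div (ha : ∀ i j, 0 ≤ a i j) (hcol : ∀ j, ∑ i, a i j = 1)
    (hw : ∀ j, 0 ≤ w j) (hw1 : ∑ j, w j = 1) :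
    -log (Fintype.card κ) ≤
      ∑ i, (∑ j, a i j * w j) * log ((∑ j, a i j * w j) / ∑ j, a i j) := by
  have hp : ∑ i, ∑ j, a i j * w j = 1 := by
    rw [sum_comm]; simp_rw [← sum_mul, hcol, one_mul, hw1]
  have hV : ∑ i, ∑ j, a i j = Fintype.card κ := by
    rw [sum_comm]; simp [hcol]
  have logSum := sum_mul_log_div_sum_le univ (x := fun i => ∑ j, a i j * w j)
    (y := fun i => ∑ j, a i j)
    (fun i _ => sum_nonneg fun j _ => mul_nonneg (ha i j) (hw j))
    (fun i _ => sum_nonneg fun j _ => ha i j)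
    fun i _ h => sum_eq_zero fun j hj => by
      rw [(sum_eq_zero_iff_of_nonneg fun j _ => ha i j).1 h j hj, zero_mul]
  rwa [hp, hV, one_mul, one_div, log_inv] at logSum

end StochasticWeights

namespace Matrix.IsHermitian

variable {𝕜 n : Type*} [RCLike 𝕜] [Fintype n] [DecidableEq n] {A : Matrix n n 𝕜}

noncomputable def eigenweight (hA : A.IsHermitian) (M : Matrix n n 𝕜) (j : n) : ℝ :=
  RCLike.re ((star (hA.eigenvectorUnitary : Matrix n n 𝕜) * M * hA.eigenvectorUnitary) j j)

theorem re_trace_mul_eq_sum_eigenweight (hA : A.IsHermitian) (M : Matrix n n 𝕜) :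
    RCLike.re (M * A).trace = ∑ j, hA.eigenweight M j * hA.eigenvalues j := by
  conv_lhs => rw [hA.spectral_theorem, Unitary.conjStarAlgAut_apply, ← mul_assoc, ← mul_assoc,
    trace_mul_cycle, ← mul_assoc]
  simp only [trace, diag, mul_diagonal, Function.comp_apply, map_sum, RCLike.re_mul_ofReal,
    eigenweight]

theorem re_trace_eq_sum_eigenweight (hA : A.IsHermitian) (M : Matrix n n 𝕜) :
    RCLike.re M.trace = ∑ j, hA.eigenweight M j := by
  conv_lhs => rw [← mul_one M, ← Unitary.coe_mul_star_self hA.eigenvectorUnitary, ← mul_assoc,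
    trace_mul_cycle, trace, map_sum]
  rfl

theorem eigenweight_nonneg (hA : A.IsHermitian) {M : Matrix n n 𝕜} (hM : M.PosSemidef) (j : n) :
    0 ≤ hA.eigenweight M j :=
  RCLike.nonneg_iff.1 (hM.conjTranspose_mul_mul_same _).diag_nonneg |>.1

theorem sum_eigenweight_eq_one (hA : A.IsHermitian) {ι : Type*} [Fintype ι]
    {P : ι → Matrix n n 𝕜} (hP : ∑ i, P i = 1) (j : n) :
    ∑ i, hA.eigenweight (P i) j = 1 := by
  simp only [eigenweight, ← map_sum, ← sum_apply, ← sum_mul, ← mul_sum, hP, mul_one,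
    Unitary.coe_star_mul_self, one_apply_eq, RCLike.one_re]

end Matrix.IsHermitian

open scoped MatrixOrder in
theorem IsCoarseGraining.posSemidef {n : Type} [Fintype n] [DecidableEq n] {ι : Type} [Fintype ι]
    {P : ι → Matrix n n ℂ} (hP : IsCoarseGraining P) (i : ι) : (P i).PosSemidef :=
  nonneg_iff_posSemidef.1 (IsStarProjection.nonneg ⟨hP.2.1 i, hP.1 i⟩)

/-- for any coarse-graining `C` and density matrix `ρ`,
`S(ρ) ≤ S_O(C)(ρ) ≤ ln dim H`. -/
theorem obsEntropy_bounded {n : Type} [Fintype n] [DecidableEq n] {ι : Type} [Fintype ι]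
    (P : ι → Matrix n n ℂ) (ρ : Matrix n n ℂ)
    (hP : IsCoarseGraining P) (hρ : IsDensityMatrix ρ) :
    vnEntropy hρ.1.1 ≤ obsEntropy P ρ ∧ obsEntropy P ρ ≤ Real.log (Fintype.card n) := by
  set hA := hρ.1.1
  have ha i j : 0 ≤ hA.eigenweight (P i) j := hA.eigenweight_nonneg (hP.posSemidef i) j
  have hcol := hA.sum_eigenweight_eq_one hP.2.2.2.2
  have hw : ∀ j, 0 ≤ hA.eigenvalues j := hρ.1.eigenvalues_nonneg
  have hw1 : ∑ j, hA.eigenvalues j = 1 := by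
    have htrace := hA.trace_eq_sum_eigenvalues.symm.trans hρ.2
    rwa [← RCLike.ofReal_sum, ← RCLike.ofReal_one, RCLike.ofReal_inj] at htrace
  have hobs : obsEntropy P ρ = -∑ i, (∑ j, hA.eigenweight (P i) j * hA.eigenvalues j) *
      log ((∑ j, hA.eigenweight (P i) j * hA.eigenvalues j) / ∑ j, hA.eigenweight (P i) j) := by
    simp only [obsEntropy, prob, vol, ← RCLike.re_to_complex, hA.re_trace_mul_eq_sum_eigenweight,
      hA.re_trace_eq_sum_eigenweight]
  rw [hobs, vnEntropy]
  exact ⟨neg_le_neg (sum_mul_log_div_le_sum_mul_log ha hcol hw),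
    neg_le.1 (neg_log_card_le_sum_mul_log_div ha hcol hw hw1)⟩
end

section
/- The observational entropy S_O(C)(ρ) equals ln dim H if and only if for every i, p_i = tr(P_i)/dim H. -/
open scoped BigOperators ComplexOrder
open Matrix

/-! With `d = dim H` and `q_i = tr P_i / d`, the observational entropy equals
`ln d - D(p ‖ q)`, where `D(p ‖ q) = ∑ p_i ln (p_i / q_i)` is the relative entropy of the
macrostate distribution `p` with respect to the distribution `q`. Both are probability vectors,
so by Gibbs' inequality `D(p ‖ q) ≥ 0`, with equality exactly when `p = q`. -/

open Real InformationTheory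

section Gibbs

variable {ι : Type*} [Fintype ι] {p q : ι → ℝ}

lemma mul_klFun_div {a b : ℝ} (hb : b ≠ 0) :
    b * klFun (a / b) = a * log (a / b) + b - a := by
  rw [klFun_apply]
  field_simp

lemma sum_mul_log_div_eq_sum_mul_klFun (hq : ∀ i, q i ≠ 0) (hpq : ∑ i, p i = ∑ i, q i) :
    ∑ i, p i * log (p i / q i) = ∑ i, q i * klFun (p i / q i) := by
  simp only [mul_klFun_div (hq _), Finset.sum_sub_distrib, Finset.sum_add_distrib, hpq]
  ring

theorem sum_mul_log_div_eq_zero_iff (hp : ∀ i, 0 ≤ p i) (hq : ∀ i, 0 < q i)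
    (hpq : ∑ i, p i = ∑ i, q i) :
    ∑ i, p i * log (p i / q i) = 0 ↔ p = q := by
  have hterm : ∀ i ∈ Finset.univ, 0 ≤ q i * klFun (p i / q i) := fun i _ =>
    mul_nonneg (hq i).le (klFun_nonneg (div_nonneg (hp i) (hq i).le))
  rw [sum_mul_log_div_eq_sum_mul_klFun (fun i => (hq i).ne') hpq,
    Finset.sum_eq_zero_iff_of_nonneg hterm, funext_iff]
  refine forall_congr' fun i => ?_
  rw [mul_eq_zero_iff_left (hq i).ne', klFun_eq_zero_iff (div_nonneg (hp i) (hq i).le),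
    div_eq_one_iff_eq (hq i).ne', forall_prop_of_true (Finset.mem_univ i)]

lemma sum_mul_log_div_div_eq {v : ι → ℝ} {d : ℝ} (hv : ∀ i, v i ≠ 0) (hd : d ≠ 0) :
    ∑ i, p i * log (p i / (v i / d)) = ∑ i, p i * log (p i / v i) + (∑ i, p i) * log d := by
  rw [Finset.sum_mul, ← Finset.sum_add_distrib]
  refine Finset.sum_congr rfl fun i _ => ?_
  rcases eq_or_ne (p i) 0 with hp | hp
  · simp [hp]
  · rw [div_div_eq_mul_div, mul_div_right_comm, log_mul (div_ne_zero hp (hv i)) hd]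
    ring

end Gibbs

namespace Matrix

variable {n : Type*} [Fintype n] {P ρ : Matrix n n ℂ}

lemma posSemidef_of_isHermitian_of_mul_self_s3 (hP : P.IsHermitian) (hPP : P * P = P) :
    P.PosSemidef := by
  simpa [hP.eq, hPP] using posSemidef_conjTranspose_mul_self P

lemma re_trace_pos_of_isHermitian_of_mul_self_s3 (hP : P.IsHermitian) (hPP : P * P = P)
    (hP0 : P ≠ 0) : 0 < P.trace.re := by
  have hpsd := posSemidef_of_isHermitian_of_mul_self_s3 hP hPP
  have hpos : 0 < P.trace := lt_of_le_of_ne hpsd.trace_nonneg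
    (Ne.symm (hP0 ∘ hpsd.trace_eq_zero_iff.mp))
  exact (Complex.pos_iff.mp hpos).1

lemma re_trace_mul_nonneg_of_isHermitian_of_mul_self_s3 (hP : P.IsHermitian) (hPP : P * P = P)
    (hρ : ρ.PosSemidef) : 0 ≤ (P * ρ).trace.re := by
  -- `tr (P ρ) = tr (P ρ P)` by cyclicity, and `P ρ Pᴴ` is positive semidefinite.
  have htrace : (P * ρ).trace = (P * ρ * Pᴴ).trace := by
    rw [hP.eq, trace_mul_cycle, hPP]
  rw [htrace]
  exact (Complex.nonneg_iff.mp (hρ.mul_mul_conjTranspose_same P).trace_nonneg).1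

end Matrix

section CoarseGraining

variable {n : Type} [Fintype n] [DecidableEq n] {ι : Type} [Fintype ι]
  {P : ι → Matrix n n ℂ} {ρ : Matrix n n ℂ}

lemma IsDensityMatrix.card_pos (hρ : IsDensityMatrix ρ) : 0 < Fintype.card n := by
  rw [Fintype.card_pos_iff]
  by_contra hn
  rw [not_nonempty_iff] at hn
  simpa [Matrix.trace_eq_zero_of_isEmpty] using hρ.2

lemma IsCoarseGraining.vol_pos_s3 (hP : IsCoarseGraining P) (i : ι) : 0 < vol P i :=
  Matrix.re_trace_pos_of_isHermitian_of_mul_self_s3 (hP.1 i) (hP.2.1 i) (hP.2.2.1 i)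

lemma IsCoarseGraining.prob_nonneg_s3 (hP : IsCoarseGraining P) (hρ : IsDensityMatrix ρ) (i : ι) :
    0 ≤ prob P ρ i :=
  Matrix.re_trace_mul_nonneg_of_isHermitian_of_mul_self_s3 (hP.1 i) (hP.2.1 i) hρ.1

lemma IsCoarseGraining.sum_prob (hP : IsCoarseGraining P) (hρ : IsDensityMatrix ρ) :
    ∑ i, prob P ρ i = 1 := by
  simp only [prob, ← Complex.re_sum, ← Matrix.trace_sum, ← Finset.sum_mul, hP.2.2.2.2,
    Matrix.one_mul, hρ.2, Complex.one_re]

lemma IsCoarseGraining.sum_vol (hP : IsCoarseGraining P) :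
    ∑ i, vol P i = Fintype.card n := by
  simp only [vol, ← Complex.re_sum, ← Matrix.trace_sum, hP.2.2.2.2, Matrix.trace_one,
    Complex.natCast_re]

lemma IsCoarseGraining.obsEntropy_eq_log_card_sub (hP : IsCoarseGraining P)
    (hρ : IsDensityMatrix ρ) :
    obsEntropy P ρ = log (Fintype.card n) -
      ∑ i, prob P ρ i * log (prob P ρ i / (vol P i / Fintype.card n)) := by
  rw [sum_mul_log_div_div_eq (fun i => (hP.vol_pos_s3 i).ne')
    (Nat.cast_ne_zero.mpr hρ.card_pos.ne'), hP.sum_prob hρ, obsEntropy]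
  ring

end CoarseGraining

/-- `S_O(C)(ρ) = ln dim H` if and only if `p_i = tr(P_i)/dim H` for every `i`. -/
theorem obsEntropy_eq_max_iff {n : Type} [Fintype n] [DecidableEq n] {ι : Type} [Fintype ι]
    (P : ι → Matrix n n ℂ) (ρ : Matrix n n ℂ)
    (hP : IsCoarseGraining P) (hρ : IsDensityMatrix ρ) :
    obsEntropy P ρ = Real.log (Fintype.card n) ↔
      ∀ i, prob P ρ i = vol P i / (Fintype.card n) := by
  have hd : (0 : ℝ) < Fintype.card n := Nat.cast_pos.mpr hρ.card_pos
  have hsum : ∑ i, prob P ρ i = ∑ i, vol P i / Fintype.card n := by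
    rw [hP.sum_prob hρ, ← Finset.sum_div, hP.sum_vol, div_self hd.ne']
  rw [hP.obsEntropy_eq_log_card_sub hρ, sub_eq_self,
    sum_mul_log_div_eq_zero_iff (hP.prob_nonneg_s3 hρ) (fun i => div_pos (hP.vol_pos_s3 i) hd) hsum,
    funext_iff]
end

section
/- If the coarse-graining contains the spectral projectors of the density matrix, i.e., C_ρ is rougher than C (written C_ρ ↪ C), then S_O(C)(ρ) = S(ρ); conversely, equality S_O(C)(ρ) = S(ρ) implies C_ρ ↪ C. -/
open scoped BigOperators ComplexOrder
open Matrix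

/-- `(Q, lam)` is the spectral decomposition of `ρ` over distinct eigenvalues:
the `Q k` form a coarse-graining, the eigenvalues `lam` are pairwise distinct,
and `ρ = ∑ k, lam k • Q k`. -/
def IsSpectralDecomp {n : Type} [Fintype n] [DecidableEq n] {κ : Type} [Fintype κ]
    (ρ : Matrix n n ℂ) (Q : κ → Matrix n n ℂ) (lam : κ → ℝ) : Prop :=
  IsCoarseGraining Q ∧ Function.Injective lam ∧ ρ = ∑ k, (lam k : ℂ) • Q k

/-!
Write `ρ = ∑ₖ λₖ Qₖ` and let `cᵢₖ = tr(Pᵢ Qₖ) = ‖Qₖ Pᵢ‖²_F ≥ 0` (`prob P (Q k) i` below). Then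
`tr Pᵢ = ∑ₖ cᵢₖ`, `pᵢ = ∑ₖ cᵢₖ λₖ` and `S(ρ) = -∑ₖ tr(Qₖ) λₖ ln λₖ = -∑ᵢ ∑ₖ cᵢₖ λₖ ln λₖ`.
Jensen's inequality for the strictly convex `x ↦ x ln x`, with weights `cᵢₖ / tr Pᵢ`, bounds the
contribution of each macrostate `i` to `S_O` from below by its contribution to `S`, with equality
iff `λ` is constant on `{k | cᵢₖ ≠ 0}`. The `λₖ` being distinct, this says that `Pᵢ` meets a single
`Qₖ`, i.e. `Pᵢ ≤ Qₖ`, and that holding for every `i` is exactly `C_ρ ↪ C`.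
-/

section Jensen

variable {κ : Type*} [Fintype κ] {c x : κ → ℝ}

lemma sum_div_sum_smul (g : κ → ℝ) :
    ∑ k, (c k / ∑ j, c j) • g k = (∑ k, c k * g k) / ∑ j, c j := by
  simp only [smul_eq_mul, Finset.sum_div, div_mul_eq_mul_div]

lemma sum_mul_log_div_le (hc : ∀ k, 0 ≤ c k) (hV : 0 < ∑ k, c k) (hx : ∀ k, 0 ≤ x k) :
    (∑ k, c k * x k) * Real.log ((∑ k, c k * x k) / ∑ k, c k) ≤
      ∑ k, c k * (x k * Real.log (x k)) := by
  have hw : ∑ k, c k / ∑ j, c j = 1 := by rw [← Finset.sum_div, div_self hV.ne']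
  have := Real.strictConvexOn_mul_log.convexOn.map_sum_le (t := Finset.univ)
    (fun k _ ↦ div_nonneg (hc k) hV.le) hw (fun k _ ↦ Set.mem_Ici.mpr (hx k))
  rwa [sum_div_sum_smul, sum_div_sum_smul, div_mul_eq_mul_div,
    div_le_div_iff_of_pos_right hV] at this

lemma sum_mul_log_div_eq_iff (hc : ∀ k, 0 ≤ c k) (hV : 0 < ∑ k, c k) (hx : ∀ k, 0 ≤ x k) :
    (∑ k, c k * x k) * Real.log ((∑ k, c k * x k) / ∑ k, c k) =
      ∑ k, c k * (x k * Real.log (x k)) ↔ ∀ ⦃j⦄, c j ≠ 0 → ∀ ⦃k⦄, c k ≠ 0 → x j = x k := by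
  have hw : ∑ k, c k / ∑ j, c j = 1 := by rw [← Finset.sum_div, div_self hV.ne']
  have := Real.strictConvexOn_mul_log.map_sum_eq_iff_of_nonneg (t := Finset.univ)
    (fun k _ ↦ div_nonneg (hc k) hV.le) hw (fun k _ ↦ Set.mem_Ici.mpr (hx k))
  rw [sum_div_sum_smul, sum_div_sum_smul, div_mul_eq_mul_div, div_left_inj' hV.ne'] at this
  simpa [div_ne_zero_iff, hV.ne'] using this

end Jensen

section Spectral

variable {𝕜 : Type*} [RCLike 𝕜] {n κ : Type*} [Fintype n] [DecidableEq n] [Fintype κ]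

lemma sum_map_eq_sum_mul_trace_of_mul_diagonal {d : n → ℝ} {lam : κ → ℝ} {W : κ → Matrix n n 𝕜}
    (hW : ∑ k, W k = 1) (hWd : ∀ k, W k * diagonal (fun i ↦ (d i : 𝕜)) = (lam k : 𝕜) • W k)
    (f : ℝ → ℝ) : ∑ i, (f (d i) : 𝕜) = ∑ k, (f (lam k) : 𝕜) * (W k).trace := by
  have hdiag : ∀ k i, W k i i * f (d i) = W k i i * f (lam k) := by
    intro k i
    have h := congrFun (congrFun (hWd k) i) i
    rw [mul_diagonal, Matrix.smul_apply, smul_eq_mul] at h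
    by_cases hk : W k i i = 0
    · simp [hk]
    · rw [RCLike.ofReal_inj.mp (mul_right_cancel₀ hk ((mul_comm _ _).trans h))]
  calc ∑ i, (f (d i) : 𝕜) = ∑ i, (∑ k, W k) i i * f (d i) := by simp [hW]
    _ = ∑ k, ∑ i, W k i i * f (lam k) := by
      simp_rw [Matrix.sum_apply, Finset.sum_mul, hdiag]
      exact Finset.sum_comm
    _ = ∑ k, (f (lam k) : 𝕜) * (W k).trace := by
      refine Finset.sum_congr rfl fun k _ ↦ ?_
      rw [mul_comm, trace, Finset.sum_mul]
      rfl

open Unitary in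
lemma Matrix.IsHermitian.sum_map_eigenvalues_eq {A : Matrix n n 𝕜} (hA : A.IsHermitian)
    {Q : κ → Matrix n n 𝕜} {lam : κ → ℝ} (hQ : ∑ k, Q k = 1)
    (hQA : ∀ k, Q k * A = (lam k : 𝕜) • Q k) (f : ℝ → ℝ) :
    ∑ i, (f (hA.eigenvalues i) : 𝕜) = ∑ k, (f (lam k) : 𝕜) * (Q k).trace := by
  set φ := conjStarAlgAut 𝕜 _ (star hA.eigenvectorUnitary)
  have htrace : ∀ M, (φ M).trace = M.trace := fun M ↦ by
    rw [conjStarAlgAut_star_apply, trace_mul_cycle,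
      mem_unitaryGroup_iff.mp hA.eigenvectorUnitary.2, one_mul]
  have hφQA : ∀ k, φ (Q k) * diagonal (RCLike.ofReal ∘ hA.eigenvalues) = (lam k : 𝕜) • φ (Q k) :=
    fun k ↦ by rw [← hA.conjStarAlgAut_star_eigenvectorUnitary, ← map_mul, hQA, map_smul]
  simpa only [htrace] using
    sum_map_eq_sum_mul_trace_of_mul_diagonal (by rw [← map_sum, hQ, map_one]) hφQA f

end Spectral

section Projector

variable {n : Type*} [Fintype n]

lemma Matrix.re_trace_conjTranspose_mul_self_nonneg (M : Matrix n n ℂ) :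
    0 ≤ (Mᴴ * M).trace.re :=
  (Complex.nonneg_iff.mp (posSemidef_conjTranspose_mul_self M).trace_nonneg).1

lemma Matrix.re_trace_conjTranspose_mul_self_eq_zero_iff {M : Matrix n n ℂ} :
    (Mᴴ * M).trace.re = 0 ↔ M = 0 := by
  have him := (Complex.nonneg_iff.mp (posSemidef_conjTranspose_mul_self M).trace_nonneg).2
  rw [← trace_conjTranspose_mul_self_eq_zero_iff, Complex.ext_iff, ← him]
  simp

lemma Matrix.trace_mul_eq_trace_conjTranspose_mul_self {A B : Matrix n n ℂ}
    (hA : A.IsHermitian) (hB : B.IsHermitian) (hA2 : A * A = A) (hB2 : B * B = B) :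
    (A * B).trace = ((B * A)ᴴ * (B * A)).trace := by
  rw [conjTranspose_mul, hA.eq, hB.eq, ← mul_assoc, mul_assoc A B B, hB2, trace_mul_cycle, hA2]

end Projector

lemma prob_sum_smul {n ι κ : Type} [Fintype n] [DecidableEq n] [Fintype ι] [Fintype κ]
    (P : ι → Matrix n n ℂ) (Q : κ → Matrix n n ℂ) (lam : κ → ℝ) (i : ι) :
    prob P (∑ k, (lam k : ℂ) • Q k) i = ∑ k, prob P (Q k) i * lam k := by
  simp [prob, Finset.mul_sum, trace_sum, Complex.re_sum, mul_comm]

namespace IsCoarseGraining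

variable {n ι κ : Type} [Fintype n] [DecidableEq n] [Fintype ι] [Fintype κ]
  {P : ι → Matrix n n ℂ} {Q : κ → Matrix n n ℂ}

lemma vol_pos_s4 (hP : IsCoarseGraining P) (i : ι) : 0 < vol P i := by
  have htr : (P i).trace = ((P i)ᴴ * P i).trace := by rw [(hP.1 i).eq, hP.2.1 i]
  rw [vol, htr]
  exact (re_trace_conjTranspose_mul_self_nonneg _).lt_of_ne'
    (re_trace_conjTranspose_mul_self_eq_zero_iff.not.mpr (hP.2.2.1 i))

lemma prob_nonneg_s4 (hP : IsCoarseGraining P) (hQ : IsCoarseGraining Q) (i : ι) (k : κ) :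
    0 ≤ prob P (Q k) i := by
  rw [prob, trace_mul_eq_trace_conjTranspose_mul_self (hP.1 i) (hQ.1 k) (hP.2.1 i) (hQ.2.1 k)]
  exact re_trace_conjTranspose_mul_self_nonneg _

lemma prob_eq_zero_iff (hP : IsCoarseGraining P) (hQ : IsCoarseGraining Q) (i : ι) (k : κ) :
    prob P (Q k) i = 0 ↔ P i * Q k = 0 := by
  rw [prob, trace_mul_eq_trace_conjTranspose_mul_self (hP.1 i) (hQ.1 k) (hP.2.1 i) (hQ.2.1 k),
    re_trace_conjTranspose_mul_self_eq_zero_iff, ← conjTranspose_eq_zero, conjTranspose_mul,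
    (hP.1 i).eq, (hQ.1 k).eq]

lemma sum_prob_s4 (hP : IsCoarseGraining P) (M : Matrix n n ℂ) : ∑ i, prob P M i = M.trace.re := by
  simp only [prob, ← Complex.re_sum, ← trace_sum, ← Finset.sum_mul, hP.2.2.2.2, one_mul]

lemma sum_prob_eq_vol (hQ : IsCoarseGraining Q) (i : ι) : ∑ k, prob P (Q k) i = vol P i := by
  simp only [prob, vol, ← Complex.re_sum, ← trace_sum, ← Finset.mul_sum, hQ.2.2.2.2, mul_one]

lemma exists_mul_eq_self_iff (hQ : IsCoarseGraining Q) {A : Matrix n n ℂ} (hA : A ≠ 0) :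
    (∃ k, A * Q k = A) ↔ ∀ ⦃j⦄, A * Q j ≠ 0 → ∀ ⦃k⦄, A * Q k ≠ 0 → j = k := by
  have hA_eq : ∑ k, A * Q k = A := by rw [← Finset.mul_sum, hQ.2.2.2.2, mul_one]
  constructor
  · rintro ⟨k₀, hk₀⟩
    have hsupp : ∀ k, A * Q k ≠ 0 → k = k₀ := fun k hk ↦ by
      by_contra hne
      exact hk (by rw [← hk₀, mul_assoc, hQ.2.2.2.1 k₀ k (Ne.symm hne), mul_zero])
    exact fun j hj k hk ↦ (hsupp j hj).trans (hsupp k hk).symm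
  · intro hsupp
    obtain ⟨k₀, -, hk₀⟩ := Finset.exists_ne_zero_of_sum_ne_zero (hA_eq.symm ▸ hA)
    have hsingle : ∑ k, A * Q k = A * Q k₀ :=
      Finset.sum_eq_single k₀ (fun k _ hk ↦ not_not.mp fun hne ↦ hk (hsupp hne hk₀)) (by simp)
    exact ⟨k₀, hsingle ▸ hA_eq⟩

lemma finer_iff (hP : IsCoarseGraining P) (hQ : IsCoarseGraining Q) :
    Finer Q P ↔ ∀ i, ∃ k, P i * Q k = P i := by
  classical
  constructor
  · intro hfine i
    choose I hI using hfine
    have hPQ : ∀ k, P i * Q k = if i ∈ I k then P i else 0 := fun k ↦ by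
      have hPP : ∀ j, P i * P j = if i = j then P i else 0 := fun j ↦ by
        split_ifs with hij
        exacts [hij ▸ hP.2.1 i, hP.2.2.2.1 i j hij]
      rw [hI k, Finset.mul_sum, Finset.sum_congr rfl fun j _ ↦ hPP j, Finset.sum_ite_eq]
    obtain ⟨k, -, hk⟩ := Finset.exists_ne_zero_of_sum_ne_zero (s := Finset.univ)
      (f := fun k ↦ P i * Q k) (by rw [← Finset.mul_sum, hQ.2.2.2.2, mul_one]; exact hP.2.2.1 i)
    refine ⟨k, ?_⟩
    rw [hPQ k] at hk ⊢
    exact if_pos (by_contra fun hik ↦ hk (if_neg hik))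
  · intro h k
    choose kf hkf using h
    have hQP : ∀ i, Q (kf i) * P i = P i := fun i ↦ by
      simpa only [conjTranspose_mul, (hP.1 i).eq, (hQ.1 _).eq] using congrArg conjTranspose (hkf i)
    refine ⟨Finset.univ.filter (kf · = k), ?_⟩
    have hQP_ite : ∀ i, Q k * P i = if kf i = k then P i else 0 := fun i ↦ by
      split_ifs with hik
      · exact hik ▸ hQP i
      · rw [← hQP i, ← mul_assoc, hQ.2.2.2.1 k (kf i) (Ne.symm hik), zero_mul]
    rw [Finset.sum_filter, ← Finset.sum_congr rfl fun i _ ↦ hQP_ite i, ← Finset.mul_sum,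
      hP.2.2.2.2, mul_one]

end IsCoarseGraining

namespace IsSpectralDecomp

variable {n ι κ : Type} [Fintype n] [DecidableEq n] [Fintype ι] [Fintype κ]
  {ρ : Matrix n n ℂ} {Q : κ → Matrix n n ℂ} {lam : κ → ℝ}

lemma mul_eq_smul (h : IsSpectralDecomp ρ Q lam) (k : κ) : Q k * ρ = (lam k : ℂ) • Q k := by
  rw [h.2.2, Finset.mul_sum, Finset.sum_eq_single k (fun l _ hl ↦ by
      rw [mul_smul_comm, h.1.2.2.2.1 k l (Ne.symm hl), smul_zero]) (by simp),
    mul_smul_comm, h.1.2.1 k]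

lemma lam_nonneg (h : IsSpectralDecomp ρ Q lam) (hρ : ρ.PosSemidef) (k : κ) : 0 ≤ lam k := by
  have hnonneg := (Complex.nonneg_iff.mp (hρ.mul_mul_conjTranspose_same (Q k)).trace_nonneg).1
  rw [(h.1.1 k).eq, trace_mul_cycle, h.1.2.1 k, h.mul_eq_smul, trace_smul, smul_eq_mul,
    Complex.re_ofReal_mul] at hnonneg
  exact nonneg_of_mul_nonneg_left hnonneg (h.1.vol_pos_s4 k)

lemma obsEntropy_eq (h : IsSpectralDecomp ρ Q lam) (P : ι → Matrix n n ℂ) :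
    obsEntropy P ρ = -∑ i, (∑ k, prob P (Q k) i * lam k) *
      Real.log ((∑ k, prob P (Q k) i * lam k) / ∑ k, prob P (Q k) i) := by
  simp only [obsEntropy, h.2.2, prob_sum_smul, h.1.sum_prob_eq_vol]

lemma vnEntropy_eq (h : IsSpectralDecomp ρ Q lam) (hH : ρ.IsHermitian) {P : ι → Matrix n n ℂ}
    (hP : IsCoarseGraining P) :
    vnEntropy hH = -∑ i, ∑ k, prob P (Q k) i * (lam k * Real.log (lam k)) := by
  have hspec := congrArg RCLike.re
    (hH.sum_map_eigenvalues_eq h.1.2.2.2.2 h.mul_eq_smul fun x ↦ x * Real.log x)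
  simp only [map_sum, RCLike.ofReal_re, RCLike.re_ofReal_mul, RCLike.re_to_complex] at hspec
  rw [vnEntropy, hspec, Finset.sum_comm]
  simp only [← hP.sum_prob_s4, Finset.sum_mul, mul_comm]

end IsSpectralDecomp

/-- `S_O(C)(ρ) = S(ρ)` if and only if the coarse-graining of the spectral
projectors of `ρ` is rougher than `C` (i.e. `C_ρ ↪ C`). -/
theorem obsEntropy_eq_vnEntropy_iff {n : Type} [Fintype n] [DecidableEq n] {ι κ : Type}
    [Fintype ι] [Fintype κ]
    (P : ι → Matrix n n ℂ) (ρ : Matrix n n ℂ)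
    (Q : κ → Matrix n n ℂ) (lam : κ → ℝ)
    (hP : IsCoarseGraining P) (hρ : IsDensityMatrix ρ)
    (hspec : IsSpectralDecomp ρ Q lam) :
    Finer Q P ↔ obsEntropy P ρ = vnEntropy hρ.1.1 := by
  have hQ := hspec.1
  have hmass : ∀ i, 0 < ∑ k, prob P (Q k) i := fun i ↦ hQ.sum_prob_eq_vol i ▸ hP.vol_pos_s4 i
  rw [hP.finer_iff hQ, hspec.obsEntropy_eq, hspec.vnEntropy_eq hρ.1.1 hP, neg_inj,
    Finset.sum_eq_sum_iff_of_le fun i _ ↦ sum_mul_log_div_le (hP.prob_nonneg_s4 hQ i) (hmass i)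
      (hspec.lam_nonneg hρ.1)]
  refine forall_congr' fun i ↦ ?_
  rw [hQ.exists_mul_eq_self_iff (hP.2.2.1 i), sum_mul_log_div_eq_iff (hP.prob_nonneg_s4 hQ i)
    (hmass i) (hspec.lam_nonneg hρ.1)]
  simp only [ne_eq, ← hP.prob_eq_zero_iff hQ, hspec.2.1.eq_iff, Finset.mem_univ, true_imp_iff]
end

section
/- The pure state |ψ⟩ = Σ_i √(tr P_i / dim H) |ψ_i⟩, where each |ψ_i⟩ is a unit vector in the subspace P_i H, achieves the maximal observational entropy: S_O(C)(|ψ⟩⟨ψ|) = ln dim H, the same value as the maximally mixed state I/dim H. -/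
open scoped BigOperators ComplexOrder
open Matrix

/-! The volume fractions `tr P_i / dim H` sum to one, and both states assign exactly these
probabilities to the macrostates: for the pure state because `P_j ψ = √(tr P_j / dim H) ψ_j`.
When `p_i = tr P_i / dim H` for all `i`, every nonzero term of `S_O` is `p_i ln dim H`. -/

theorem Real.sum_div_mul_log_div_div_self {ι : Type*} [Fintype ι] {V : ι → ℝ} {N : ℝ}
    (hV : ∑ j, V j = N) : ∑ j, V j / N * Real.log (V j / N / V j) = -Real.log N := by
  rcases eq_or_ne N 0 with rfl | hN
  · simp
  have hterm : ∀ j, V j / N * Real.log (V j / N / V j) = V j / N * Real.log N⁻¹ := by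
    intro j
    rcases eq_or_ne (V j) 0 with hVj | hVj
    · simp [hVj]
    · rw [div_div_cancel_left' hVj]
  simp only [hterm, ← Finset.sum_mul, ← Finset.sum_div, hV, div_self hN, one_mul, Real.log_inv]

namespace Matrix

variable {n : Type*} [Fintype n]

theorem IsStarProjection.posSemidef {R : Type*} [Ring R] [PartialOrder R] [StarRing R]
    [StarOrderedRing R] {M : Matrix n n R} (hM : IsStarProjection M) :
    M.PosSemidef := by
  have hM_eq : Mᴴ * M = M := by
    rw [← star_eq_conjTranspose, hM.isSelfAdjoint.star_eq, hM.isIdempotentElem.eq]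
  exact hM_eq ▸ posSemidef_conjTranspose_mul_self M

theorem IsStarProjection.trace_mul_vecMulVec_star {R : Type*} [CommRing R] [StarRing R]
    {M : Matrix n n R} (hM : IsStarProjection M) (ψ : n → R) :
    (M * vecMulVec ψ (star ψ)).trace = (M *ᵥ ψ) ⬝ᵥ star (M *ᵥ ψ) := by
  have hrow : star ψ ᵥ* M = star (M *ᵥ ψ) := by
    rw [star_mulVec, ← star_eq_conjTranspose, hM.isSelfAdjoint.star_eq]
  calc (M * vecMulVec ψ (star ψ)).trace
      = (M * (vecMulVec ψ (star ψ) * M)).trace := by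
        rw [← Matrix.mul_assoc, trace_mul_comm (M * _), ← Matrix.mul_assoc,
          hM.isIdempotentElem.eq]
    _ = (M *ᵥ ψ) ⬝ᵥ star (M *ᵥ ψ) := by
        rw [vecMulVec_mul, hrow, mul_vecMulVec, trace_vecMulVec]

end Matrix

namespace IsCoarseGraining

variable {n ι : Type} [Fintype n] [DecidableEq n] [Fintype ι] {P : ι → Matrix n n ℂ}

theorem isStarProjection (hP : IsCoarseGraining P) (i : ι) : IsStarProjection (P i) :=
  ⟨hP.2.1 i, (hP.1 i).isSelfAdjoint⟩

theorem vol_nonneg (hP : IsCoarseGraining P) (i : ι) : 0 ≤ vol P i :=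
  (Complex.nonneg_iff.mp ((hP.isStarProjection i).posSemidef.trace_nonneg)).1

theorem sum_vol_s5 (hP : IsCoarseGraining P) : ∑ i, vol P i = Fintype.card n := by
  simp only [vol, ← Complex.re_sum, ← trace_sum, hP.2.2.2.2, trace_one, Complex.natCast_re]

theorem mulVec_eq_zero_of_ne (hP : IsCoarseGraining P) {i j : ι} (hij : i ≠ j) {v : n → ℂ}
    (hv : P i *ᵥ v = v) : P j *ᵥ v = 0 := by
  rw [← hv, mulVec_mulVec, hP.2.2.2.1 j i hij.symm, zero_mulVec]

theorem mulVec_sum_smul (hP : IsCoarseGraining P) {v : ι → n → ℂ}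
    (hv : ∀ i, P i *ᵥ v i = v i) (c : ι → ℂ) (j : ι) :
    P j *ᵥ ∑ i, c i • v i = c j • v j := by
  rw [mulVec_sum, Finset.sum_eq_single j (fun i _ hij => ?_) (by simp), mulVec_smul, hv]
  rw [mulVec_smul, hP.mulVec_eq_zero_of_ne hij (hv i), smul_zero]

theorem obsEntropy_eq_log_card (hP : IsCoarseGraining P) {ρ : Matrix n n ℂ}
    (hρ : ∀ i, prob P ρ i = vol P i / Fintype.card n) :
    obsEntropy P ρ = Real.log (Fintype.card n) := by
  rw [obsEntropy, neg_eq_iff_eq_neg]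
  simp only [hρ]
  exact Real.sum_div_mul_log_div_div_self hP.sum_vol_s5

end IsCoarseGraining

theorem prob_inv_card_smul_one {n ι : Type} [Fintype n] [DecidableEq n] [Fintype ι]
    (P : ι → Matrix n n ℂ) (i : ι) :
    prob P ((Fintype.card n : ℂ)⁻¹ • (1 : Matrix n n ℂ)) i = vol P i / Fintype.card n := by
  rw [prob, vol, Matrix.mul_smul, mul_one, trace_smul, smul_eq_mul, ← Complex.ofReal_natCast,
    ← Complex.ofReal_inv, Complex.re_ofReal_mul, inv_mul_eq_div]

/-- the pure state `|ψ⟩ = ∑_i √(tr P_i / dim H) |ψ_i⟩`, with each `|ψ_i⟩` a unit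
vector in the subspace `P_i H`, achieves the maximal observational entropy `ln dim H`, the same
value as the maximally mixed state `I / dim H`. -/
theorem pure_state_max_obsEntropy {n : Type} [Fintype n] [DecidableEq n] {ι : Type} [Fintype ι]
    (P : ι → Matrix n n ℂ) (hP : IsCoarseGraining P)
    (v : ι → (n → ℂ))
    (hv_mem : ∀ i, P i *ᵥ v i = v i)
    (hv_unit : ∀ i, star (v i) ⬝ᵥ v i = 1) :
    obsEntropy P
        (Matrix.vecMulVec (∑ i, (Real.sqrt (vol P i / (Fintype.card n)) : ℂ) • v i)
          (star (∑ i, (Real.sqrt (vol P i / (Fintype.card n)) : ℂ) • v i)))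
      = Real.log (Fintype.card n) ∧
    obsEntropy P (((Fintype.card n : ℂ))⁻¹ • (1 : Matrix n n ℂ)) = Real.log (Fintype.card n) := by
  refine ⟨hP.obsEntropy_eq_log_card fun j => ?_,
    hP.obsEntropy_eq_log_card (prob_inv_card_smul_one P)⟩
  have hfrac : 0 ≤ vol P j / Fintype.card n := div_nonneg (hP.vol_nonneg j) (Nat.cast_nonneg _)
  rw [prob, (hP.isStarProjection j).trace_mul_vecMulVec_star, hP.mulVec_sum_smul hv_mem,
    star_smul, smul_dotProduct, dotProduct_smul, dotProduct_comm, hv_unit,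
    Complex.star_def, Complex.conj_ofReal, smul_eq_mul, smul_eq_mul, mul_one,
    ← Complex.ofReal_mul, Real.mul_self_sqrt hfrac, Complex.ofReal_re]
end

section
/- If every projector in the coarse-graining C commutes with the Hamiltonian H, then the observational entropy is constant under unitary evolution: S_O(C)(U(t) ρ U(t)†) = S_O(C)(ρ) for all t, where U(t) = exp(-iHt). -/
open scoped BigOperators ComplexOrder
open Matrix

/-! `U(t) = exp(-itH)` is unitary (as `-itH` is skew-adjoint) and commutes with every `P_i`,
so `tr(P_i U ρ U†) = tr(U P_i ρ U†) = tr(P_i ρ)`: the macrostate probabilities, and with them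
the observational entropy, are conserved. -/

theorem Matrix.exp_mem_unitary_of_mem_skewAdjoint {m 𝔸 : Type*} [Fintype m] [DecidableEq m]
    [NormedRing 𝔸] [NormedAlgebra ℚ 𝔸] [CompleteSpace 𝔸] [StarRing 𝔸] [ContinuousStar 𝔸]
    {A : Matrix m m 𝔸} (hA : A ∈ skewAdjoint (Matrix m m 𝔸)) :
    NormedSpace.exp A ∈ unitary (Matrix m m 𝔸) := by
  have hstar : star (NormedSpace.exp A) = NormedSpace.exp (-A) := by
    rw [← skewAdjoint.mem_iff.mp hA, star_eq_conjTranspose, star_eq_conjTranspose,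
      exp_conjTranspose]
  rw [Unitary.mem_iff, hstar, ← exp_add_of_commute _ _ (Commute.refl A).neg_left,
    ← exp_add_of_commute _ _ (Commute.refl A).neg_right, neg_add_cancel, add_neg_cancel,
    NormedSpace.exp_zero, and_self]

theorem Complex.ofReal_mul_I_mem_skewAdjoint (t : ℝ) : (t : ℂ) * Complex.I ∈ skewAdjoint ℂ := by
  simp [skewAdjoint.mem_iff]

theorem Matrix.trace_mul_conj_of_commute {m R : Type*} [Fintype m] [DecidableEq m]
    [CommSemiring R] {P U V : Matrix m m R} (hUP : Commute U P) (hVU : V * U = 1)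
    (ρ : Matrix m m R) : (P * (U * ρ * V)).trace = (P * ρ).trace := by
  rw [← mul_assoc, ← mul_assoc, ← hUP.eq, mul_assoc U, mul_assoc U, trace_mul_comm, mul_assoc,
    hVU, mul_one]

section ObservationalEntropy

variable {n : Type} [Fintype n] [DecidableEq n] {ι : Type} [Fintype ι] {P : ι → Matrix n n ℂ}

theorem prob_unitary_conj_of_commute {U : Matrix n n ℂ} (hU : U ∈ unitary (Matrix n n ℂ))
    {i : ι} (hUP : Commute U (P i)) (ρ : Matrix n n ℂ) :
    prob P (U * ρ * Uᴴ) i = prob P ρ i :=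
  congrArg Complex.re <| trace_mul_conj_of_commute hUP (Unitary.star_mul_self_of_mem hU) ρ

theorem obsEntropy_congr {ρ σ : Matrix n n ℂ} (h : ∀ i, prob P σ i = prob P ρ i) :
    obsEntropy P σ = obsEntropy P ρ := by
  simp only [obsEntropy, h]

end ObservationalEntropy

theorem obsEntropy_const_of_commute_general {n : Type} [Fintype n] [DecidableEq n] {ι : Type} [Fintype ι]
    (P : ι → Matrix n n ℂ) (Hm ρ : Matrix n n ℂ)
    (hH : Hm.IsHermitian)
    (hcomm : ∀ i, P i * Hm = Hm * P i) (t : ℝ) :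
    obsEntropy P
        (NormedSpace.exp ((-(t : ℂ) * Complex.I) • Hm) * ρ *
          (NormedSpace.exp ((-(t : ℂ) * Complex.I) • Hm))ᴴ)
      = obsEntropy P ρ := by
  have hU : NormedSpace.exp ((-(t : ℂ) * Complex.I) • Hm) ∈ unitary (Matrix n n ℂ) := by
    refine exp_mem_unitary_of_mem_skewAdjoint (hH.isSelfAdjoint.smul_mem_skewAdjoint ?_)
    simpa using Complex.ofReal_mul_I_mem_skewAdjoint (-t)
  refine obsEntropy_congr fun i => prob_unitary_conj_of_commute hU ?_ ρ
  exact ((Commute.symm (hcomm i)).smul_left _).exp_left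

/-- if every projector of the coarse-graining commutes with the Hamiltonian,
then observational entropy is constant under the unitary evolution `U(t) = exp(-iHt)`:
`S_O(C)(U(t) ρ U(t)†) = S_O(C)(ρ)`. -/
theorem obsEntropy_const_of_commute {n : Type} [Fintype n] [DecidableEq n] {ι : Type} [Fintype ι]
    (P : ι → Matrix n n ℂ) (Hm ρ : Matrix n n ℂ)
    (hP : IsCoarseGraining P) (hH : Hm.IsHermitian) (hρ : IsDensityMatrix ρ)
    (hcomm : ∀ i, P i * Hm = Hm * P i) (t : ℝ) :
    obsEntropy P
        (NormedSpace.exp ((-(t : ℂ) * Complex.I) • Hm) * ρ *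
          (NormedSpace.exp ((-(t : ℂ) * Complex.I) • Hm))ᴴ)
      = obsEntropy P ρ :=
  obsEntropy_const_of_commute_general P Hm ρ hH hcomm t
end

section
/- Observational entropy with multiple coarse-grainings is bounded: for any ordered set of coarse-grainings (C₁,…,C_n) and density matrix ρ, S(ρ) ≤ S_O(C₁,…,C_n)(ρ) ≤ ln dim H. -/
open scoped BigOperators ComplexOrder
open Matrix

/-- The descending product `P_{i_n} ⋯ P_{i₁}` for a sequence of coarse-grainings and a
multi-index `i`. -/
noncomputable def seqProd {n : Type} [Fintype n] [DecidableEq n] {N : ℕ} {ι : Fin N → Type}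
    (P : ∀ k, ι k → Matrix n n ℂ) (i : ∀ k, ι k) : Matrix n n ℂ :=
  ((List.finRange N).reverse.map (fun k => P k (i k))).prod

/-- Probability of the multi-macrostate `(i₁, …, i_n)`:
`p_{i₁,…,i_n} = tr(P_{i_n}⋯P_{i₁} ρ P_{i₁}⋯P_{i_n})`. -/
noncomputable def mProb {n : Type} [Fintype n] [DecidableEq n] {N : ℕ} {ι : Fin N → Type}
    [∀ k, Fintype (ι k)] (P : ∀ k, ι k → Matrix n n ℂ) (ρ : Matrix n n ℂ)
    (i : ∀ k, ι k) : ℝ :=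
  ((seqProd P i * ρ * (seqProd P i)ᴴ).trace).re

/-- Volume of the multi-macrostate `(i₁, …, i_n)`:
`V_{i₁,…,i_n} = tr(P_{i_n}⋯P_{i₁}⋯P_{i_n})`. -/
noncomputable def mVol {n : Type} [Fintype n] [DecidableEq n] {N : ℕ} {ι : Fin N → Type}
    [∀ k, Fintype (ι k)] (P : ∀ k, ι k → Matrix n n ℂ) (i : ∀ k, ι k) : ℝ :=
  ((seqProd P i * (seqProd P i)ᴴ).trace).re

/-- Observational entropy with multiple coarse-grainings
`S_O(C₁,…,C_n)(ρ) = -∑ p_{i₁,…,i_n} ln (p_{i₁,…,i_n} / V_{i₁,…,i_n})`. -/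
noncomputable def mObsEntropy {n : Type} [Fintype n] [DecidableEq n] {N : ℕ} {ι : Fin N → Type}
    [∀ k, Fintype (ι k)] (P : ∀ k, ι k → Matrix n n ℂ) (ρ : Matrix n n ℂ) : ℝ :=
  -∑ i : (∀ k, ι k), mProb P ρ i * Real.log (mProb P ρ i / mVol P i)

/-! The products `K_i = P_{i_n} ⋯ P_{i₁}` satisfy `∑ K_iᴴ K_i = 1`, so `Q_i = K_iᴴ K_i` is a POVM
with `p_i = tr(ρ Q_i)` and `V_i = tr Q_i`. For an orthonormal eigenbasis `v_j` of `ρ` with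
eigenvalues `λ_j`, the numbers `c_ij = ⟪v_j, Q_i v_j⟫` form a column-stochastic matrix with
`p_i = ∑_j λ_j c_ij` and `V_i = ∑_j c_ij`. Both bounds are then the log-sum inequality: applied for
each `i` to `(λ_j c_ij)_j` and `(c_ij)_j` and summed over `i`, it gives
`∑_i p_i ln (p_i / V_i) ≤ ∑_j λ_j ln λ_j`; applied to `p` and `V`, with `∑ p = 1` and
`∑ V = dim H`, it gives `∑_i p_i ln (p_i / V_i) ≥ -ln dim H`. -/

namespace Real

theorem mul_log_add_sub_mul_le_mul_log_div {a b t : ℝ} (ha : 0 ≤ a) (hb : 0 ≤ b)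
    (hab : b = 0 → a = 0) (ht : 0 < t) :
    a * log t + (a - b * t) ≤ a * log (a / b) := by
  obtain rfl | ha := ha.eq_or_lt
  · simpa using mul_nonneg hb ht.le
  have hb : 0 < b := hb.lt_of_ne fun h => ha.ne' (hab h.symm)
  have key : a * log (b * t / a) ≤ a * (b * t / a - 1) :=
    mul_le_mul_of_nonneg_left (log_le_sub_one_of_pos (by positivity)) ha.le
  rw [log_div (by positivity) ha.ne', log_mul hb.ne' ht.ne'] at key
  rw [log_div ha.ne' hb.ne']
  field_simp at key
  linarith

/-- The log-sum inequality. -/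
theorem sum_mul_log_div_sum_le_s11 {ι : Type*} [Fintype ι] {a b : ι → ℝ} (ha : ∀ i, 0 ≤ a i)
    (hb : ∀ i, 0 ≤ b i) (hab : ∀ i, b i = 0 → a i = 0) :
    (∑ i, a i) * log ((∑ i, a i) / ∑ i, b i) ≤ ∑ i, a i * log (a i / b i) := by
  obtain hA | hA := (Fintype.sum_nonneg (f := a) ha).eq_or_lt
  · have hzero := (Fintype.sum_eq_zero_iff_of_nonneg (f := a) ha).mp hA.symm
    simp [hzero]
  have hB : 0 < ∑ i, b i := by
    refine (Fintype.sum_nonneg (f := b) hb).lt_of_ne fun hB => hA.ne' ?_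
    have hzero := (Fintype.sum_eq_zero_iff_of_nonneg (f := b) hb).mp hB.symm
    exact Finset.sum_eq_zero fun i _ => hab i (congrFun hzero i)
  calc (∑ i, a i) * log ((∑ i, a i) / ∑ i, b i)
      = ∑ i, (a i * log ((∑ i, a i) / ∑ i, b i)
          + (a i - b i * ((∑ i, a i) / ∑ i, b i))) := by
        rw [Finset.sum_add_distrib, Finset.sum_sub_distrib, ← Finset.sum_mul, ← Finset.sum_mul,
          mul_div_cancel₀ _ hB.ne', sub_self, add_zero]
    _ ≤ ∑ i, a i * log (a i / b i) :=
        Finset.sum_le_sum fun i _ =>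
          mul_log_add_sub_mul_le_mul_log_div (ha i) (hb i) (hab i) (by positivity)

section Stochastic

variable {ι κ : Type*} [Fintype ι] [Fintype κ] {c : ι → κ → ℝ} {q : κ → ℝ}

theorem neg_sum_mul_log_le_of_stochastic (hc : ∀ i j, 0 ≤ c i j) (hcol : ∀ j, ∑ i, c i j = 1)
    (hq : ∀ j, 0 ≤ q j) :
    -∑ j, q j * log (q j) ≤
      -∑ i, (∑ j, q j * c i j) * log ((∑ j, q j * c i j) / ∑ j, c i j) := by
  refine neg_le_neg ?_
  calc ∑ i, (∑ j, q j * c i j) * log ((∑ j, q j * c i j) / ∑ j, c i j)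
      ≤ ∑ i, ∑ j, q j * c i j * log (q j * c i j / c i j) :=
        Finset.sum_le_sum fun i _ => sum_mul_log_div_sum_le_s11 (fun j => mul_nonneg (hq j) (hc i j))
          (hc i) fun j h => by simp [h]
    _ = ∑ i, ∑ j, c i j * (q j * log (q j)) := by
        refine Finset.sum_congr rfl fun i _ => Finset.sum_congr rfl fun j _ => ?_
        obtain h | h := eq_or_ne (c i j) 0
        · simp [h]
        · rw [mul_div_cancel_right₀ _ h]
          ring
    _ = ∑ j, q j * log (q j) := by
        rw [Finset.sum_comm]
        simp only [← Finset.sum_mul, hcol, one_mul]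

theorem neg_sum_mul_log_le_log_card_of_stochastic (hc : ∀ i j, 0 ≤ c i j)
    (hcol : ∀ j, ∑ i, c i j = 1) (hq : ∀ j, 0 ≤ q j) (hq1 : ∑ j, q j = 1) :
    -∑ i, (∑ j, q j * c i j) * log ((∑ j, q j * c i j) / ∑ j, c i j) ≤
      log (Fintype.card κ) := by
  have hp : ∑ i, ∑ j, q j * c i j = 1 := by
    rw [Finset.sum_comm]
    simp only [← Finset.mul_sum, hcol, mul_one, hq1]
  have hV : ∑ i, ∑ j, c i j = Fintype.card κ := by
    rw [Finset.sum_comm]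
    simp [hcol]
  have hsupp : ∀ i, ∑ j, c i j = 0 → ∑ j, q j * c i j = 0 := fun i h => by
    simp [(Fintype.sum_eq_zero_iff_of_nonneg (f := c i) (hc i)).mp h]
  have := sum_mul_log_div_sum_le_s11 (fun i => Finset.sum_nonneg fun j _ => mul_nonneg (hq j) (hc i j))
    (fun i => Finset.sum_nonneg fun j _ => hc i j) hsupp
  rw [hp, hV, one_mul, one_div, log_inv] at this
  linarith

end Stochastic

end Real

namespace Matrix

variable {n : Type} [Fintype n] [DecidableEq n]

theorem trace_conjStarAlgAut {𝕜 : Type*} [RCLike 𝕜] (u : unitary (Matrix n n 𝕜))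
    (A : Matrix n n 𝕜) : (Unitary.conjStarAlgAut 𝕜 _ u A).trace = A.trace := by
  rw [Unitary.conjStarAlgAut_apply, trace_mul_cycle, Unitary.coe_star_mul_self, one_mul]

theorem IsHermitian.trace_mul_eq_sum_eigenvalues_mul {𝕜 : Type*} [RCLike 𝕜]
    {A : Matrix n n 𝕜} (hA : A.IsHermitian) (B : Matrix n n 𝕜) :
    (A * B).trace = ∑ j, (hA.eigenvalues j : 𝕜) *
      Unitary.conjStarAlgAut 𝕜 _ (star hA.eigenvectorUnitary) B j j := by
  rw [← trace_conjStarAlgAut (star hA.eigenvectorUnitary), map_mul,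
    hA.conjStarAlgAut_star_eigenvectorUnitary, trace, Fintype.sum_congr]
  intro j
  simp [diagonal_mul]

end Matrix

section SeqProd

variable {n : Type} [Fintype n] [DecidableEq n]

theorem seqProd_succ {N : ℕ} {ι : Fin (N + 1) → Type} (P : ∀ k, ι k → Matrix n n ℂ)
    (i : ∀ k, ι k) :
    seqProd P i = seqProd (fun k => P k.succ) (fun k => i k.succ) * P 0 (i 0) := by
  simp [seqProd, List.finRange_succ, Function.comp_def, List.map_reverse]

theorem sum_conjTranspose_mul_seqProd {N : ℕ} {ι : Fin N → Type} [∀ k, Fintype (ι k)]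
    (P : ∀ k, ι k → Matrix n n ℂ) (hP : ∀ k, ∑ i, (P k i)ᴴ * P k i = 1) :
    ∑ i : ∀ k, ι k, (seqProd P i)ᴴ * seqProd P i = 1 := by
  induction N with
  | zero => simp [seqProd]
  | succ N ih =>
    rw [← (Fin.consEquiv ι).sum_comp, Fintype.sum_prod_type]
    calc ∑ a, ∑ i, (seqProd P (Fin.consEquiv ι (a, i)))ᴴ * seqProd P (Fin.consEquiv ι (a, i))
        = ∑ a, (P 0 a)ᴴ * (∑ i : ∀ k : Fin N, ι k.succ,
            (seqProd (fun k => P k.succ) i)ᴴ * seqProd (fun k => P k.succ) i) * P 0 a := by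
          simp only [Finset.mul_sum, Finset.sum_mul, Fin.consEquiv_apply, seqProd_succ,
            Fin.cons_zero, Fin.cons_succ, conjTranspose_mul, mul_assoc]
      _ = 1 := by simp only [ih _ fun k => hP k.succ, mul_one, hP 0]

theorem IsCoarseGraining.sum_conjTranspose_mul_self {ι : Type} [Fintype ι]
    {P : ι → Matrix n n ℂ} (hP : IsCoarseGraining P) : ∑ i, (P i)ᴴ * P i = 1 := by
  simpa only [(hP.1 _).eq, hP.2.1] using hP.2.2.2.2

end SeqProd

namespace Matrix.IsHermitian

variable {n : Type} [Fintype n] [DecidableEq n] {A : Matrix n n ℂ} (hA : A.IsHermitian)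

/-- `re ⟪v_j, B v_j⟫` for the eigenvectors `v_j = hA.eigenvectorBasis j` of `A`. -/
noncomputable def eigenbasisDiag (B : Matrix n n ℂ) (j : n) : ℝ :=
  (Unitary.conjStarAlgAut ℂ _ (star hA.eigenvectorUnitary) B j j).re

theorem re_trace_mul_eq_sum_eigenvalues_mul (B : Matrix n n ℂ) :
    (A * B).trace.re = ∑ j, hA.eigenvalues j * hA.eigenbasisDiag B j := by
  simp [hA.trace_mul_eq_sum_eigenvalues_mul, eigenbasisDiag]

theorem re_trace_eq_sum_eigenbasisDiag (B : Matrix n n ℂ) :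
    B.trace.re = ∑ j, hA.eigenbasisDiag B j := by
  rw [← trace_conjStarAlgAut (star hA.eigenvectorUnitary), trace, Complex.re_sum]
  rfl

theorem eigenbasisDiag_nonneg {B : Matrix n n ℂ} (hB : B.PosSemidef) (j : n) :
    0 ≤ hA.eigenbasisDiag B j := by
  have := (hB.mul_mul_conjTranspose_same (star hA.eigenvectorUnitary : Matrix n n ℂ)).diag_nonneg
    (i := j)
  exact Complex.nonneg_iff.mp this |>.1

theorem sum_eigenbasisDiag_eq_one {ι : Type} [Fintype ι] {Q : ι → Matrix n n ℂ}
    (hQ : ∑ i, Q i = 1) (j : n) : ∑ i, hA.eigenbasisDiag (Q i) j = 1 := by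
  simp only [eigenbasisDiag, ← Complex.re_sum, ← Matrix.sum_apply, ← map_sum, hQ, map_one]
  simp

end Matrix.IsHermitian

section POVM

variable {n : Type} [Fintype n] [DecidableEq n] {ι : Type} [Fintype ι]

noncomputable def povmObsEntropy (Q : ι → Matrix n n ℂ) (ρ : Matrix n n ℂ) : ℝ :=
  -∑ i, (ρ * Q i).trace.re * Real.log ((ρ * Q i).trace.re / (Q i).trace.re)

theorem povmObsEntropy_eq_of_isHermitian {ρ : Matrix n n ℂ} (hρ : ρ.IsHermitian)
    (Q : ι → Matrix n n ℂ) :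
    povmObsEntropy Q ρ = -∑ i, (∑ j, hρ.eigenvalues j * hρ.eigenbasisDiag (Q i) j) *
      Real.log ((∑ j, hρ.eigenvalues j * hρ.eigenbasisDiag (Q i) j) /
        ∑ j, hρ.eigenbasisDiag (Q i) j) := by
  simp only [povmObsEntropy, hρ.re_trace_mul_eq_sum_eigenvalues_mul,
    ← hρ.re_trace_eq_sum_eigenbasisDiag]

variable {Q : ι → Matrix n n ℂ}

theorem vnEntropy_le_povmObsEntropy (hQ : ∀ i, (Q i).PosSemidef) (hQ1 : ∑ i, Q i = 1)
    {ρ : Matrix n n ℂ} (hρ : ρ.PosSemidef) :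
    vnEntropy hρ.1 ≤ povmObsEntropy Q ρ := by
  rw [povmObsEntropy_eq_of_isHermitian hρ.1]
  exact Real.neg_sum_mul_log_le_of_stochastic
    (fun i => hρ.1.eigenbasisDiag_nonneg (hQ i)) (hρ.1.sum_eigenbasisDiag_eq_one hQ1)
    hρ.eigenvalues_nonneg

theorem povmObsEntropy_le_log_card (hQ : ∀ i, (Q i).PosSemidef) (hQ1 : ∑ i, Q i = 1)
    {ρ : Matrix n n ℂ} (hρ : IsDensityMatrix ρ) :
    povmObsEntropy Q ρ ≤ Real.log (Fintype.card n) := by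
  rw [povmObsEntropy_eq_of_isHermitian hρ.1.1]
  refine Real.neg_sum_mul_log_le_log_card_of_stochastic
    (fun i => hρ.1.1.eigenbasisDiag_nonneg (hQ i)) (hρ.1.1.sum_eigenbasisDiag_eq_one hQ1)
    hρ.1.eigenvalues_nonneg ?_
  simpa using congrArg Complex.re (hρ.1.1.trace_eq_sum_eigenvalues.symm.trans hρ.2)

end POVM

theorem mObsEntropy_eq_povmObsEntropy {n : Type} [Fintype n] [DecidableEq n] {N : ℕ}
    {ι : Fin N → Type} [∀ k, Fintype (ι k)] (P : ∀ k, ι k → Matrix n n ℂ) (ρ : Matrix n n ℂ) :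
    mObsEntropy P ρ = povmObsEntropy (fun i => (seqProd P i)ᴴ * seqProd P i) ρ := by
  have hprob (K : Matrix n n ℂ) : (K * ρ * Kᴴ).trace = (ρ * (Kᴴ * K)).trace := by
    rw [trace_mul_cycle, trace_mul_comm]
  simp only [mObsEntropy, mProb, mVol, povmObsEntropy, hprob, trace_mul_comm (seqProd P _)]

/-- observational entropy with multiple coarse-grainings is bounded:
`S(ρ) ≤ S_O(C₁,…,C_n)(ρ) ≤ ln dim H`. -/
theorem mObsEntropy_bounded {n : Type} [Fintype n] [DecidableEq n] {N : ℕ} {ι : Fin N → Type}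
    [∀ k, Fintype (ι k)] (P : ∀ k, ι k → Matrix n n ℂ) (ρ : Matrix n n ℂ)
    (hP : ∀ k, IsCoarseGraining (P k)) (hρ : IsDensityMatrix ρ) :
    vnEntropy hρ.1.1 ≤ mObsEntropy P ρ ∧ mObsEntropy P ρ ≤ Real.log (Fintype.card n) := by
  have hQ : ∀ i, ((seqProd P i)ᴴ * seqProd P i).PosSemidef := fun i =>
    posSemidef_conjTranspose_mul_self _
  have hQ1 := sum_conjTranspose_mul_seqProd P fun k => (hP k).sum_conjTranspose_mul_self
  rw [mObsEntropy_eq_povmObsEntropy]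
  exact ⟨vnEntropy_le_povmObsEntropy hQ hQ1 hρ.1, povmObsEntropy_le_log_card hQ hQ1 hρ⟩
end

section
/- Observational entropy is non-increasing with each added coarse-graining: S_O(C₁,…,C_n)(ρ) ≥ S_O(C₁,…,C_n,C_{n+1})(ρ) for any ordered set of coarse-grainings and any density matrix ρ, with equality if and only if p_{i₁,…,i_{n+1}} = (V_{i₁,…,i_{n+1}}/V_{i₁,…,i_n}) p_{i₁,…,i_n} for all indices. -/
open scoped BigOperators ComplexOrder
open Matrix

/-!
Refining by `Cₙ₊₁ = {Q_j}` splits `p_{i₁…iₙ}` into the `p_{i₁…iₙ j}` and `V_{i₁…iₙ}` into the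
`V_{i₁…iₙ j}`, because `∑_j Q_j X Q_j` has the same trace as `X`. Hence
`S_O(C₁,…,Cₙ) - S_O(C₁,…,Cₙ₊₁)` is the relative entropy of `p_{i₁…iₙ₊₁}` with respect to
`V_{i₁…iₙ₊₁} / V_{i₁…iₙ} · p_{i₁…iₙ}`, two distributions of the same total mass, and Gibbs'
inequality gives both the sign and the equality case.
-/

namespace Real

open InformationTheory

lemma mul_log_div_sub_add_eq_mul_klFun {x y : ℝ} (hxy : y = 0 → x = 0) :
    x * log (x / y) - x + y = y * klFun (x / y) := by
  rcases eq_or_ne y 0 with rfl | hy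
  · simp [hxy rfl]
  · rw [klFun_apply]
    field_simp
    ring

variable {J : Type} [Fintype J] {f g : J → ℝ}

lemma sum_mul_log_div_eq_sum_mul_klFun (hfg : ∀ j, g j = 0 → f j = 0)
    (hsum : ∑ j, f j = ∑ j, g j) :
    ∑ j, f j * log (f j / g j) = ∑ j, g j * klFun (f j / g j) := by
  have h := Finset.sum_congr rfl fun j (_ : j ∈ Finset.univ) =>
    mul_log_div_sub_add_eq_mul_klFun (hfg j)
  rw [← h, Finset.sum_add_distrib, Finset.sum_sub_distrib, hsum, sub_add_cancel]

lemma sum_mul_log_div_nonneg (hf : ∀ j, 0 ≤ f j) (hg : ∀ j, 0 ≤ g j)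
    (hfg : ∀ j, g j = 0 → f j = 0) (hsum : ∑ j, f j = ∑ j, g j) :
    0 ≤ ∑ j, f j * log (f j / g j) := by
  rw [sum_mul_log_div_eq_sum_mul_klFun hfg hsum]
  exact Finset.sum_nonneg fun j _ => mul_nonneg (hg j) (klFun_nonneg (div_nonneg (hf j) (hg j)))

lemma sum_mul_log_div_eq_zero_iff (hf : ∀ j, 0 ≤ f j) (hg : ∀ j, 0 ≤ g j)
    (hfg : ∀ j, g j = 0 → f j = 0) (hsum : ∑ j, f j = ∑ j, g j) :
    ∑ j, f j * log (f j / g j) = 0 ↔ ∀ j, f j = g j := by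
  have hterm : ∀ j, 0 ≤ g j * klFun (f j / g j) := fun j =>
    mul_nonneg (hg j) (klFun_nonneg (div_nonneg (hf j) (hg j)))
  rw [sum_mul_log_div_eq_sum_mul_klFun hfg hsum,
    Finset.sum_eq_zero_iff_of_nonneg fun j _ => hterm j]
  refine forall_congr' fun j => ?_
  simp only [Finset.mem_univ, true_implies]
  rcases eq_or_ne (g j) 0 with hgj | hgj
  · simp [hgj, hfg j hgj]
  · rw [mul_eq_zero, klFun_eq_zero_iff (div_nonneg (hf j) (hg j)), div_eq_one_iff_eq hgj]
    simp [hgj]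

end Real

namespace Matrix

variable {n : Type} [Fintype n]

lemma PosSemidef.re_trace_nonneg {A : Matrix n n ℂ} (hA : A.PosSemidef) : 0 ≤ A.trace.re :=
  (Complex.nonneg_iff.1 hA.trace_nonneg).1

lemma PosSemidef.re_trace_eq_zero_iff {A : Matrix n n ℂ} (hA : A.PosSemidef) :
    A.trace.re = 0 ↔ A.trace = 0 := by
  refine ⟨fun h => Complex.ext h (Complex.nonneg_iff.1 hA.trace_nonneg).2.symm, fun h => ?_⟩
  rw [h, Complex.zero_re]

lemma sum_trace_mul_mul_conjTranspose [DecidableEq n] {ι : Type} [Fintype ι] {Q : ι → Matrix n n ℂ}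
    (hQ : IsCoarseGraining Q) (M : Matrix n n ℂ) :
    ∑ j, (Q j * M * (Q j)ᴴ).trace = M.trace := by
  obtain ⟨hherm, hidem, -, -, hsum⟩ := hQ
  have hterm : ∀ j, (Q j * M * (Q j)ᴴ).trace = (Q j * M).trace := fun j => by
    rw [trace_mul_cycle, (hherm j).eq, hidem j]
  simp only [hterm, ← trace_sum, ← Finset.sum_mul, hsum, one_mul]

end Matrix

lemma Fin.sum_univ_pi_snoc {N : ℕ} {α : Fin (N + 1) → Type} [∀ k, Fintype (α k)]
    {M : Type} [AddCommMonoid M] (F : (∀ k, α k) → M) :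
    ∑ i, F i = ∑ i' : ∀ k : Fin N, α k.castSucc, ∑ j : α (Fin.last N), F (Fin.snoc i' j) := by
  rw [← (Fin.snocEquiv α).sum_comp F, Fintype.sum_prod_type, Finset.sum_comm]
  rfl

section Observational

variable {n : Type} [Fintype n] [DecidableEq n]

lemma seqProd_snoc {N : ℕ} {ι : Fin (N + 1) → Type} (P : ∀ k, ι k → Matrix n n ℂ)
    (i' : ∀ k : Fin N, ι k.castSucc) (j : ι (Fin.last N)) :
    seqProd P (Fin.snoc i' j) = P (Fin.last N) j * seqProd (fun k : Fin N => P k.castSucc) i' := by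
  simp [seqProd, List.finRange_succ_last, List.map_reverse, Function.comp_def]

section

variable {N : ℕ} {ι : Fin N → Type} [∀ k, Fintype (ι k)] (P : ∀ k, ι k → Matrix n n ℂ)

lemma mVol_eq_mProb_one (i : ∀ k, ι k) : mVol P i = mProb P 1 i := by
  simp [mVol, mProb]

lemma mProb_nonneg {ρ : Matrix n n ℂ} (hρ : ρ.PosSemidef) (i : ∀ k, ι k) : 0 ≤ mProb P ρ i :=
  (hρ.mul_mul_conjTranspose_same _).re_trace_nonneg

lemma mVol_nonneg (i : ∀ k, ι k) : 0 ≤ mVol P i := by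
  simpa only [mVol_eq_mProb_one] using mProb_nonneg P Matrix.PosSemidef.one i

lemma mVol_eq_zero_iff (i : ∀ k, ι k) : mVol P i = 0 ↔ seqProd P i = 0 := by
  rw [mVol, (Matrix.posSemidef_self_mul_conjTranspose _).re_trace_eq_zero_iff,
    Matrix.trace_mul_conjTranspose_self_eq_zero_iff]

lemma mProb_eq_zero_of_mVol_eq_zero (ρ : Matrix n n ℂ) {i : ∀ k, ι k} (h : mVol P i = 0) :
    mProb P ρ i = 0 := by
  simp [mProb, (mVol_eq_zero_iff P i).1 h]

end

/-- `p_{i₁…iₙ}` spread over the cells of `Cₙ₊₁` in proportion to their volumes. -/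
noncomputable def mProbSpread {N : ℕ} {ι : Fin (N + 1) → Type} [∀ k, Fintype (ι k)]
    (P : ∀ k, ι k → Matrix n n ℂ) (ρ : Matrix n n ℂ) (i : ∀ k, ι k) : ℝ :=
  mVol P i / mVol (fun k : Fin N => P k.castSucc) (fun k => i k.castSucc) *
    mProb (fun k : Fin N => P k.castSucc) ρ (fun k => i k.castSucc)

variable {N : ℕ} {ι : Fin (N + 1) → Type} [∀ k, Fintype (ι k)] {P : ∀ k, ι k → Matrix n n ℂ}

lemma sum_mProb_snoc (hQ : IsCoarseGraining (P (Fin.last N))) (ρ : Matrix n n ℂ)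
    (i' : ∀ k : Fin N, ι k.castSucc) :
    ∑ j, mProb P ρ (Fin.snoc i' j) = mProb (fun k : Fin N => P k.castSucc) ρ i' := by
  simp only [mProb, seqProd_snoc, Matrix.conjTranspose_mul, ← Complex.re_sum]
  rw [← Matrix.sum_trace_mul_mul_conjTranspose hQ]
  simp only [Matrix.mul_assoc]

lemma sum_mVol_snoc (hQ : IsCoarseGraining (P (Fin.last N))) (i' : ∀ k : Fin N, ι k.castSucc) :
    ∑ j, mVol P (Fin.snoc i' j) = mVol (fun k : Fin N => P k.castSucc) i' := by
  simpa only [mVol_eq_mProb_one] using sum_mProb_snoc hQ 1 i'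

lemma mVol_snoc_eq_zero {i' : ∀ k : Fin N, ι k.castSucc}
    (h : mVol (fun k : Fin N => P k.castSucc) i' = 0) (j : ι (Fin.last N)) :
    mVol P (Fin.snoc i' j) = 0 := by
  rw [mVol_eq_zero_iff] at h ⊢
  rw [seqProd_snoc, h, Matrix.mul_zero]

lemma mProbSpread_snoc (ρ : Matrix n n ℂ) (i' : ∀ k : Fin N, ι k.castSucc) (j : ι (Fin.last N)) :
    mProbSpread P ρ (Fin.snoc i' j) = mVol P (Fin.snoc i' j) /
      mVol (fun k : Fin N => P k.castSucc) i' * mProb (fun k : Fin N => P k.castSucc) ρ i' := by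
  simp only [mProbSpread, Fin.snoc_castSucc]

lemma mProbSpread_nonneg {ρ : Matrix n n ℂ} (hρ : ρ.PosSemidef) (i : ∀ k, ι k) :
    0 ≤ mProbSpread P ρ i :=
  mul_nonneg (div_nonneg (mVol_nonneg P i) (mVol_nonneg _ _)) (mProb_nonneg _ hρ _)

lemma sum_mProbSpread_snoc (hQ : IsCoarseGraining (P (Fin.last N))) (ρ : Matrix n n ℂ)
    (i' : ∀ k : Fin N, ι k.castSucc) :
    ∑ j, mProbSpread P ρ (Fin.snoc i' j) = mProb (fun k : Fin N => P k.castSucc) ρ i' := by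
  simp only [mProbSpread_snoc, ← Finset.sum_mul, ← Finset.sum_div, sum_mVol_snoc hQ]
  rcases eq_or_ne (mVol (fun k : Fin N => P k.castSucc) i') 0 with hV | hV
  · rw [mProb_eq_zero_of_mVol_eq_zero _ ρ hV, mul_zero]
  · rw [div_self hV, one_mul]

lemma sum_mProbSpread (hQ : IsCoarseGraining (P (Fin.last N))) (ρ : Matrix n n ℂ) :
    ∑ i, mProbSpread P ρ i = ∑ i, mProb P ρ i := by
  simp only [Fin.sum_univ_pi_snoc (α := ι), sum_mProbSpread_snoc hQ, sum_mProb_snoc hQ]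

lemma mProb_eq_zero_of_mProbSpread_eq_zero (hQ : IsCoarseGraining (P (Fin.last N)))
    {ρ : Matrix n n ℂ} (hρ : ρ.PosSemidef) {i : ∀ k, ι k} (h : mProbSpread P ρ i = 0) :
    mProb P ρ i = 0 := by
  rw [← Fin.snoc_init_self i] at h ⊢
  rw [mProbSpread_snoc, mul_eq_zero, div_eq_zero_iff] at h
  rcases h with (hW | hV) | hp
  · exact mProb_eq_zero_of_mVol_eq_zero P ρ hW
  · exact mProb_eq_zero_of_mVol_eq_zero P ρ (mVol_snoc_eq_zero hV _)
  · rw [← sum_mProb_snoc hQ] at hp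
    exact (Finset.sum_eq_zero_iff_of_nonneg fun j _ => mProb_nonneg P hρ _).1 hp _
      (Finset.mem_univ _)

lemma mul_log_div_mProbSpread_snoc (hQ : IsCoarseGraining (P (Fin.last N)))
    {ρ : Matrix n n ℂ} (hρ : ρ.PosSemidef) (i' : ∀ k : Fin N, ι k.castSucc)
    (j : ι (Fin.last N)) :
    mProb P ρ (Fin.snoc i' j) *
        Real.log (mProb P ρ (Fin.snoc i' j) / mProbSpread P ρ (Fin.snoc i' j)) =
      mProb P ρ (Fin.snoc i' j) * Real.log (mProb P ρ (Fin.snoc i' j) / mVol P (Fin.snoc i' j)) -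
      mProb P ρ (Fin.snoc i' j) * Real.log (mProb (fun k : Fin N => P k.castSucc) ρ i' /
        mVol (fun k : Fin N => P k.castSucc) i') := by
  set f := mProb P ρ (Fin.snoc i' j)
  set W := mVol P (Fin.snoc i' j)
  set V := mVol (fun k : Fin N => P k.castSucc) i'
  set p := mProb (fun k : Fin N => P k.castSucc) ρ i'
  rcases eq_or_ne f 0 with hf | hf
  · simp [hf]
  have hg : mProbSpread P ρ (Fin.snoc i' j) ≠ 0 :=
    mt (mProb_eq_zero_of_mProbSpread_eq_zero hQ hρ) hf
  rw [mProbSpread_snoc] at hg ⊢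
  obtain ⟨⟨hW, hV⟩, hp⟩ := mul_ne_zero_iff.1 hg |>.imp_left div_ne_zero_iff.1
  rw [show f / (W / V * p) = f / W / (p / V) by ring,
    Real.log_div (div_ne_zero hf hW) (div_ne_zero hp hV), mul_sub]

lemma mObsEntropy_castSucc_sub_eq (hQ : IsCoarseGraining (P (Fin.last N)))
    {ρ : Matrix n n ℂ} (hρ : ρ.PosSemidef) :
    mObsEntropy (fun k : Fin N => P k.castSucc) ρ - mObsEntropy P ρ =
      ∑ i, mProb P ρ i * Real.log (mProb P ρ i / mProbSpread P ρ i) := by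
  simp only [mObsEntropy, Fin.sum_univ_pi_snoc (α := ι), mul_log_div_mProbSpread_snoc hQ hρ,
    Finset.sum_sub_distrib, ← Finset.sum_mul, sum_mProb_snoc hQ]
  ring

end Observational

/-- observational entropy is non-increasing with each added coarse-graining:
`S_O(C₁,…,C_n)(ρ) ≥ S_O(C₁,…,C_n,C_{n+1})(ρ)`, with equality iff
`p_{i₁,…,i_{n+1}} = (V_{i₁,…,i_{n+1}}/V_{i₁,…,i_n}) p_{i₁,…,i_n}` for all indices. -/
theorem mObsEntropy_antitone {n : Type} [Fintype n] [DecidableEq n] {N : ℕ}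
    {ι : Fin (N + 1) → Type} [∀ k, Fintype (ι k)]
    (P : ∀ k, ι k → Matrix n n ℂ) (ρ : Matrix n n ℂ)
    (hP : ∀ k, IsCoarseGraining (P k)) (hρ : IsDensityMatrix ρ) :
    mObsEntropy (fun k : Fin N => P k.castSucc) ρ ≥ mObsEntropy P ρ ∧
    (mObsEntropy (fun k : Fin N => P k.castSucc) ρ = mObsEntropy P ρ ↔
      ∀ i : ∀ k, ι k,
        mProb P ρ i =
          (mVol P i / mVol (fun k : Fin N => P k.castSucc) (fun k => i k.castSucc)) *
            mProb (fun k : Fin N => P k.castSucc) ρ (fun k => i k.castSucc)) := by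
  obtain ⟨hρ, -⟩ := hρ
  have hQ := hP (Fin.last N)
  have hf := mProb_nonneg P hρ
  have hg := mProbSpread_nonneg (P := P) hρ
  have hfg := fun i => mProb_eq_zero_of_mProbSpread_eq_zero (i := i) hQ hρ
  have hsum := (sum_mProbSpread hQ ρ).symm
  refine ⟨?_, ?_⟩
  · rw [ge_iff_le, ← sub_nonneg, mObsEntropy_castSucc_sub_eq hQ hρ]
    exact Real.sum_mul_log_div_nonneg hf hg hfg hsum
  · rw [← sub_eq_zero, mObsEntropy_castSucc_sub_eq hQ hρ]
    exact Real.sum_mul_log_div_eq_zero_iff hf hg hfg hsum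
end

section
/- For a single coarse-graining C = {P_i}, the observational entropy equals the von Neumann entropy of the coarse-grained state: S_O(C)(ρ) = S(Σ_i (p_i/tr P_i) P_i), where p_i = tr(P_i ρ). -/
open scoped BigOperators ComplexOrder
open Matrix

/-! The coarse-grained state `σ = ∑ cᵢ • Pᵢ`, `cᵢ = pᵢ / tr Pᵢ`, has eigenvalue `cᵢ` with
multiplicity `tr Pᵢ`, so `∑_λ f λ = ∑ᵢ f cᵢ * tr Pᵢ` for every `f`. For polynomial `f` this holds
because `c ↦ ∑ cᵢ • Pᵢ` is an algebra homomorphism out of `ι → ℝ`, and an arbitrary `f` agrees with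
a polynomial on the finitely many points involved. For `f x = x log x`, using `cᵢ tr Pᵢ = pᵢ`, the
two sides are `-S(σ)` and `-S_O(C)(ρ)`. -/

open Finset Polynomial

namespace CompleteOrthogonalIdempotents

variable {R A ι : Type*} [CommSemiring R] [Semiring A] [Algebra R A] [Fintype ι] {e : ι → A}

noncomputable def sumSMulAlgHom (he : CompleteOrthogonalIdempotents e) : (ι → R) →ₐ[R] A where
  toFun c := ∑ i, c i • e i
  map_one' := by simp [he.complete]
  map_mul' a b := by
    classical
    simp only [Pi.mul_apply, sum_mul_sum, smul_mul_smul_comm, he.mul_eq]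
    simp
  map_zero' := by simp
  map_add' a b := by simp [add_smul, sum_add_distrib]
  commutes' r := by simp [Algebra.algebraMap_eq_smul_one, ← smul_sum, he.complete]

lemma aeval_sum_smul (he : CompleteOrthogonalIdempotents e) (c : ι → R) (q : R[X]) :
    aeval (∑ i, c i • e i) q = ∑ i, q.eval (c i) • e i := by
  simpa [sumSMulAlgHom, aeval_pi] using aeval_algHom_apply (sumSMulAlgHom he) c q

end CompleteOrthogonalIdempotents

lemma Polynomial.exists_eval_eq_on {F : Type*} [Field F] [DecidableEq F] (s : Finset F)
    (g : F → F) : ∃ q : F[X], ∀ x ∈ s, q.eval x = g x :=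
  ⟨Lagrange.interpolate s id g, fun _ hx => Lagrange.eval_interpolate_at_node g (Set.injOn_id _) hx⟩

namespace Matrix.IsHermitian

variable {𝕜 n : Type*} [RCLike 𝕜] [Fintype n] {A : Matrix n n 𝕜}

lemma trace_ne_zero_of_isIdempotentElem (hA : A.IsHermitian) (hidem : IsIdempotentElem A)
    (hA0 : A ≠ 0) : A.trace ≠ 0 := by
  have hAA : A.trace = (Aᴴ * A).trace := by rw [hA.eq, hidem.eq]
  rwa [hAA, Ne, trace_conjTranspose_mul_self_eq_zero_iff]

lemma ofReal_re_trace (hA : A.IsHermitian) : ((RCLike.re A.trace : ℝ) : 𝕜) = A.trace :=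
  RCLike.conj_eq_iff_re.mp <| by rw [← RCLike.star_def, ← trace_conjTranspose, hA.eq]

variable [DecidableEq n]

lemma trace_cfc (hA : A.IsHermitian) (f : ℝ → ℝ) :
    (cfc f A).trace = ∑ i, (f (hA.eigenvalues i) : 𝕜) := by
  rw [hA.cfc_eq, IsHermitian.cfc, Unitary.conjStarAlgAut_apply, trace_mul_cycle,
    Unitary.coe_star_mul_self, one_mul, trace_diagonal]
  rfl

lemma sum_eigenvalues_comp_eq {ι : Type*} [Fintype ι] (hA : A.IsHermitian)
    {P : ι → Matrix n n 𝕜} (hP : CompleteOrthogonalIdempotents P) {c : ι → ℝ}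
    (hAc : A = ∑ i, (c i : 𝕜) • P i) (g : ℝ → ℝ) :
    ∑ j, (g (hA.eigenvalues j) : 𝕜) = ∑ i, (g (c i) : 𝕜) * (P i).trace := by
  classical
  obtain ⟨q, hq⟩ := exists_eval_eq_on (univ.image hA.eigenvalues ∪ univ.image c) g
  have hAc' : A = ∑ i, c i • P i := by simpa only [RCLike.real_smul_eq_coe_smul (K := 𝕜)] using hAc
  calc ∑ j, (g (hA.eigenvalues j) : 𝕜) = ∑ j, ((q.eval (hA.eigenvalues j) : ℝ) : 𝕜) := by
        refine sum_congr rfl fun j _ => ?_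
        rw [hq _ (mem_union_left _ (mem_image_of_mem _ (mem_univ j)))]
    _ = (cfc (q.eval ·) A).trace := (hA.trace_cfc (q.eval ·)).symm
    _ = (aeval A q).trace := by rw [cfc_polynomial q A hA.isSelfAdjoint]
    _ = ∑ i, ((q.eval (c i) : ℝ) : 𝕜) * (P i).trace := by
        rw [hAc', hP.aeval_sum_smul, trace_sum]
        refine sum_congr rfl fun i _ => ?_
        rw [trace_smul, RCLike.real_smul_eq_coe_smul (K := 𝕜), smul_eq_mul]
    _ = ∑ i, (g (c i) : 𝕜) * (P i).trace := by
        refine sum_congr rfl fun i _ => ?_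
        rw [hq _ (mem_union_right _ (mem_image_of_mem _ (mem_univ i)))]

end Matrix.IsHermitian

theorem obsEntropy_eq_vnEntropy_coarseGrained_general {n : Type} [Fintype n] [DecidableEq n]
    {ι : Type} [Fintype ι]
    (P : ι → Matrix n n ℂ) (ρ : Matrix n n ℂ)
    (hP : IsCoarseGraining P)
    (hσ : (∑ i, ((prob P ρ i / vol P i : ℝ) : ℂ) • P i).IsHermitian) :
    obsEntropy P ρ = vnEntropy hσ := by
  obtain ⟨hHerm, hidem, hne, horth, hsum⟩ := hP
  have hvol : ∀ i, ((vol P i : ℝ) : ℂ) = (P i).trace := fun i => (hHerm i).ofReal_re_trace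
  have hvol0 : ∀ i, vol P i ≠ 0 := fun i h0 =>
    (hHerm i).trace_ne_zero_of_isIdempotentElem (hidem i) (hne i)
      (by rw [← hvol, h0, Complex.ofReal_zero])
  have hspec : ∑ j, hσ.eigenvalues j * Real.log (hσ.eigenvalues j)
      = ∑ i, prob P ρ i / vol P i * Real.log (prob P ρ i / vol P i) * vol P i := by
    have h := hσ.sum_eigenvalues_comp_eq ⟨⟨hidem, fun i j hij => horth i j hij⟩, hsum⟩
      (c := fun i => prob P ρ i / vol P i) rfl (fun x => x * Real.log x)
    simp only [← hvol] at h
    apply RCLike.ofReal_injective (K := ℂ)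
    push_cast at h ⊢
    exact h
  rw [obsEntropy, vnEntropy, neg_inj, hspec]
  refine sum_congr rfl fun i _ => ?_
  rw [mul_right_comm, div_mul_cancel₀ _ (hvol0 i)]

/-- for a single coarse-graining, observational entropy equals the von Neumann
entropy of the coarse-grained state: `S_O(C)(ρ) = S(∑_i (p_i / tr P_i) P_i)`. -/
theorem obsEntropy_eq_vnEntropy_coarseGrained {n : Type} [Fintype n] [DecidableEq n]
    {ι : Type} [Fintype ι]
    (P : ι → Matrix n n ℂ) (ρ : Matrix n n ℂ)
    (hP : IsCoarseGraining P) (hρ : IsDensityMatrix ρ)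
    (hσ : (∑ i, ((prob P ρ i / vol P i : ℝ) : ℂ) • P i).IsHermitian) :
    obsEntropy P ρ = vnEntropy hσ :=
  obsEntropy_eq_vnEntropy_coarseGrained_general P ρ hP hσ
end
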